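/- arXiv:1110.0403 — 6 statements merged into one kernel-verified Lean document; each statement's English description precedes it below -/
import Mathlib

section
/- Under the abstract pricing framework, the approximation scheme, and the backward algorithm defined in the context, for every payoff Ξ, every positive integer k with δ := T/k < δ₀, and every i ∈ {1,…,N}, one has |Ψ_i[Ξ](0;T) − Ψ̃^{(M,r,k)}_i[Ξ](0;T)| ≤ (1+B)·‖Ξ‖∞·T^α/k^{α−1}, where α := min(r+q, M). -/
open MeasureTheory Finset

/-- The Poisson-series price functional
`Ψ_i[Ξ](t;v) = Σ_{m=0}^∞ e^{−(v−t)} (v−t)^m/m! · Φ_{i,m}[Ξ](v−t;v)`. -/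
noncomputable def Psi {N : ℕ} (Φ : Fin N → ℕ → (Fin N → ℝ) → ℝ → ℝ → ℝ)
    (i : Fin N) (Ξ : Fin N → ℝ) (t v : ℝ) : ℝ :=
  ∑' m : ℕ, Real.exp (-(v - t)) * (v - t) ^ m / (Nat.factorial m : ℝ) * Φ i m Ξ (v - t) v

/-- The one-step approximation `Ψ̃^{(M,r)}_i[Ξ](t;v)`, using the exact coefficients
`Φ_{i,m}` for `m < r` and the approximate coefficients `Φ̃_{i,m}` for `r ≤ m < M`. -/
noncomputable def PsiStep {N : ℕ} (M r : ℕ)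
    (Φ Φt : Fin N → ℕ → (Fin N → ℝ) → ℝ → ℝ → ℝ)
    (i : Fin N) (Ξ : Fin N → ℝ) (t v : ℝ) : ℝ :=
  (∑ m ∈ Finset.range r,
      Real.exp (-(v - t)) * (v - t) ^ m / (Nat.factorial m : ℝ) * Φ i m Ξ (v - t) v)
  + ∑ m ∈ Finset.Ico r M,
      Real.exp (-(v - t)) * (v - t) ^ m / (Nat.factorial m : ℝ) * Φt i m Ξ (v - t) v

/-- The backward algorithm iterates: with `δ := T/k`, `PsiIter M r k T Φ Φt Ξ j i` is the
approximation `Ψ̃^{(M,r,k)}_i[Ξ](nδ;T)` at time `nδ` for `n = k - 1 - j`; in particular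
`j = 0` gives the first step `Ψ̃^{(M,r)}_i[Ξ]((k−1)δ;T)` and `j = k - 1` gives the
approximation at time `0`. -/
noncomputable def PsiIter {N : ℕ} (M r k : ℕ) (T : ℝ)
    (Φ Φt : Fin N → ℕ → (Fin N → ℝ) → ℝ → ℝ → ℝ)
    (Ξ : Fin N → ℝ) : ℕ → Fin N → ℝ
  | 0 => fun i => PsiStep M r Φ Φt i Ξ (((k - 1 : ℕ) : ℝ) * (T / k)) T
  | j + 1 => fun i => PsiStep M r Φ Φt i (PsiIter M r k T Φ Φt Ξ j)
      (((k - 1 - (j + 1) : ℕ) : ℝ) * (T / k)) (((k - 1 - j : ℕ) : ℝ) * (T / k))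

set_option maxHeartbeats 1000000

/-- **Theorem (error bound for the backward algorithm).** Under the abstract pricing framework
and approximation scheme, for every payoff `Ξ`, every positive integer `k` with
`δ := T/k < δ₀` and every regime `i`, the algorithm output satisfies
`|Ψ_i[Ξ](0;T) − Ψ̃^{(M,r,k)}_i[Ξ](0;T)| ≤ (1+B)·‖Ξ‖∞·T^α/k^{α−1}` with `α = min(r+q, M)`. -/
theorem poisson_algorithm_error
    {N : ℕ} (hN : 0 < N) (T : ℝ) (hT : 0 < T)
    (Φ Φt : Fin N → ℕ → (Fin N → ℝ) → ℝ → ℝ → ℝ)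
    (hΦlin : ∀ (i : Fin N) (m : ℕ) (ζ v : ℝ), 0 ≤ ζ → ζ ≤ v → v ≤ T →
      IsLinearMap ℝ fun Ξ : Fin N → ℝ => Φ i m Ξ ζ v)
    (hΦone : ∀ (i : Fin N) (m : ℕ) (ζ v : ℝ), 0 ≤ ζ → ζ ≤ v → v ≤ T →
      Φ i m (fun _ => 1) ζ v ∈ Set.Icc (0 : ℝ) 1)
    (hΦbd : ∀ (i : Fin N) (m : ℕ) (Ξ : Fin N → ℝ) (ζ v : ℝ), 0 ≤ ζ → ζ ≤ v → v ≤ T →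
      |Φ i m Ξ ζ v| ≤ ‖Ξ‖ * Φ i m (fun _ => 1) ζ v)
    (hsemi : ∀ (i : Fin N) (Ξ : Fin N → ℝ) (t s v : ℝ), 0 ≤ t → t ≤ s → s ≤ v → v ≤ T →
      Psi Φ i Ξ t v = Psi Φ i (fun ℓ => Psi Φ ℓ Ξ s v) t s)
    (M r : ℕ) (hM : 1 ≤ M) (hr : 1 ≤ r) (hrM : r ≤ M)
    (q : ℝ) (hq : 1 ≤ q) (B : ℝ) (hB : 0 ≤ B)
    (δ₀ : ℝ) (hδ₀pos : 0 < δ₀) (hδ₀le : δ₀ ≤ min T 1)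
    (hΦtlin : ∀ (i : Fin N) (m : ℕ) (ζ v : ℝ), r ≤ m → m < M →
      0 < ζ → ζ ≤ v → v ≤ T → ζ < δ₀ →
      IsLinearMap ℝ fun Ξ : Fin N → ℝ => Φt i m Ξ ζ v)
    (hΦterr : ∀ (i : Fin N) (m : ℕ) (Ξ : Fin N → ℝ) (ζ v : ℝ), r ≤ m → m < M →
      0 < ζ → ζ ≤ v → v ≤ T → ζ < δ₀ →
      |Φt i m Ξ ζ v - Φ i m Ξ ζ v| ≤ B * ‖Ξ‖ * ζ ^ q)
    (hΦtbd : ∀ (i : Fin N) (m : ℕ) (Ξ : Fin N → ℝ) (ζ v : ℝ), r ≤ m → m < M →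
      0 < ζ → ζ ≤ v → v ≤ T → ζ < δ₀ →
      |Φt i m Ξ ζ v| ≤ ‖Ξ‖ * Φ i m (fun _ => 1) ζ v)
    (Ξ : Fin N → ℝ) (k : ℕ) (hk : 0 < k) (hδ : T / k < δ₀) (i : Fin N) :
    |Psi Φ i Ξ 0 T - PsiIter M r k T Φ Φt Ξ (k - 1) i|
      ≤ (1 + B) * ‖Ξ‖ * T ^ (min ((r : ℝ) + q) (M : ℝ))
          / (k : ℝ) ^ (min ((r : ℝ) + q) (M : ℝ) - 1) := by
  set α := min ((r : ℝ) + q) (M : ℝ) with hαdef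
  have hδ₀1 : δ₀ ≤ 1 := hδ₀le.trans (min_le_right _ _)
  have hkR : (0 : ℝ) < k := by exact_mod_cast hk
  have hδpos : 0 < T / k := div_pos hT hkR
  have hδ1 : T / k ≤ 1 := (hδ.trans_le hδ₀1).le
  have hkδ : (k : ℝ) * (T / k) = T := by field_simp
  have hαM : α ≤ (M : ℝ) := min_le_right _ _
  have hαrq : α ≤ (r : ℝ) + q := min_le_left _ _
  -- tsum of exponential series
  have hexp : ∀ x : ℝ, ∑' m : ℕ, x ^ m / (Nat.factorial m : ℝ) = Real.exp x := by
    intro x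
    rw [Real.exp_eq_exp_ℝ, NormedSpace.exp_eq_tsum (𝕂 := ℝ)]
    exact tsum_congr fun n => by rw [smul_eq_mul, div_eq_inv_mul]
  have hexpS : ∀ x : ℝ, HasSum (fun m : ℕ => x ^ m / (Nat.factorial m : ℝ)) (Real.exp x) := by
    intro x
    have := (Real.summable_pow_div_factorial x).hasSum
    rwa [hexp x] at this
  -- the Poisson weights
  have hw_nonneg : ∀ (ζ : ℝ), 0 ≤ ζ → ∀ m : ℕ,
      0 ≤ Real.exp (-ζ) * ζ ^ m / (Nat.factorial m : ℝ) := by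
    intro ζ hζ m
    positivity
  have hw_hasSum : ∀ ζ : ℝ,
      HasSum (fun m : ℕ => Real.exp (-ζ) * ζ ^ m / (Nat.factorial m : ℝ)) 1 := by
    intro ζ
    have h := (hexpS ζ).mul_left (Real.exp (-ζ))
    have h2 : Real.exp (-ζ) * Real.exp ζ = 1 := by
      rw [← Real.exp_add]; simp
    rw [h2] at h
    convert h using 2 with m
    · rfl
    ring
  have hw_summable : ∀ ζ : ℝ,
      Summable (fun m : ℕ => Real.exp (-ζ) * ζ ^ m / (Nat.factorial m : ℝ)) :=
    fun ζ => (hw_hasSum ζ).summable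
  -- absolute bound on Φ
  have hΦabs : ∀ (i : Fin N) (m : ℕ) (Ξ' : Fin N → ℝ) (ζ v : ℝ), 0 ≤ ζ → ζ ≤ v → v ≤ T →
      |Φ i m Ξ' ζ v| ≤ ‖Ξ'‖ := by
    intro i m Ξ' ζ v h0 h1 h2
    refine (hΦbd i m Ξ' ζ v h0 h1 h2).trans ?_
    have := (hΦone i m ζ v h0 h1 h2).2
    calc ‖Ξ'‖ * Φ i m (fun _ => 1) ζ v ≤ ‖Ξ'‖ * 1 :=
          mul_le_mul_of_nonneg_left this (norm_nonneg _)
      _ = ‖Ξ'‖ := mul_one _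
  -- summability of the Psi series
  have hsummable : ∀ (Ξ' : Fin N → ℝ) (i : Fin N) (t v : ℝ), 0 ≤ t → t ≤ v → v ≤ T →
      Summable (fun m : ℕ =>
        Real.exp (-(v - t)) * (v - t) ^ m / (Nat.factorial m : ℝ) * Φ i m Ξ' (v - t) v) := by
    intro Ξ' i t v h0 h1 h2
    have hζ : 0 ≤ v - t := sub_nonneg.mpr h1
    have hζv : v - t ≤ v := by linarith
    apply Summable.of_norm
    refine Summable.of_nonneg_of_le (fun m => norm_nonneg _) (fun m => ?_)
      ((hw_summable (v - t)).mul_right ‖Ξ'‖)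
    rw [Real.norm_eq_abs, abs_mul, abs_of_nonneg (hw_nonneg _ hζ m)]
    exact mul_le_mul_of_nonneg_left (hΦabs i m Ξ' _ v hζ hζv h2) (hw_nonneg _ hζ m)
  -- bound |Psi| ≤ ‖Ξ'‖
  have hPsiBound : ∀ (Ξ' : Fin N → ℝ) (i : Fin N) (t v : ℝ), 0 ≤ t → t ≤ v → v ≤ T →
      |Psi Φ i Ξ' t v| ≤ ‖Ξ'‖ := by
    intro Ξ' i t v h0 h1 h2
    have hζ : 0 ≤ v - t := sub_nonneg.mpr h1
    have hζv : v - t ≤ v := by linarith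
    have hg : HasSum (fun m : ℕ =>
        Real.exp (-(v - t)) * (v - t) ^ m / (Nat.factorial m : ℝ) * ‖Ξ'‖) (1 * ‖Ξ'‖) :=
      (hw_hasSum (v - t)).mul_right _
    rw [one_mul] at hg
    have := tsum_of_norm_bounded hg (f := fun m : ℕ =>
        Real.exp (-(v - t)) * (v - t) ^ m / (Nat.factorial m : ℝ) * Φ i m Ξ' (v - t) v) ?_
    · exact this
    · intro m
      rw [Real.norm_eq_abs, abs_mul, abs_of_nonneg (hw_nonneg _ hζ m)]
      exact mul_le_mul_of_nonneg_left (hΦabs i m Ξ' _ v hζ hζv h2) (hw_nonneg _ hζ m)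
  -- bound |PsiStep| ≤ ‖Ξ'‖
  have hStepBound : ∀ (Ξ' : Fin N → ℝ) (i : Fin N) (t v : ℝ), 0 ≤ t → t < v → v ≤ T →
      v - t < δ₀ → |PsiStep M r Φ Φt i Ξ' t v| ≤ ‖Ξ'‖ := by
    intro Ξ' i t v h0 h1 h2 h3
    have hζ : 0 < v - t := sub_pos.mpr h1
    have hζv : v - t ≤ v := by linarith
    set w : ℕ → ℝ := fun m => Real.exp (-(v - t)) * (v - t) ^ m / (Nat.factorial m : ℝ) with hw
    have hwn : ∀ m, 0 ≤ w m := hw_nonneg _ hζ.le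
    have hbd1 : |∑ m ∈ Finset.range r, w m * Φ i m Ξ' (v - t) v|
        ≤ ∑ m ∈ Finset.range r, w m * ‖Ξ'‖ := by
      refine (Finset.abs_sum_le_sum_abs _ _).trans (Finset.sum_le_sum fun m _ => ?_)
      rw [abs_mul, abs_of_nonneg (hwn m)]
      exact mul_le_mul_of_nonneg_left (hΦabs i m Ξ' _ v hζ.le hζv h2) (hwn m)
    have hbd2 : |∑ m ∈ Finset.Ico r M, w m * Φt i m Ξ' (v - t) v|
        ≤ ∑ m ∈ Finset.Ico r M, w m * ‖Ξ'‖ := by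
      refine (Finset.abs_sum_le_sum_abs _ _).trans (Finset.sum_le_sum fun m hm => ?_)
      rw [Finset.mem_Ico] at hm
      rw [abs_mul, abs_of_nonneg (hwn m)]
      refine mul_le_mul_of_nonneg_left ?_ (hwn m)
      refine (hΦtbd i m Ξ' _ v hm.1 hm.2 hζ hζv h2 h3).trans ?_
      have := (hΦone i m _ v hζ.le hζv h2).2
      calc ‖Ξ'‖ * Φ i m (fun _ => 1) (v - t) v ≤ ‖Ξ'‖ * 1 :=
            mul_le_mul_of_nonneg_left this (norm_nonneg _)
        _ = ‖Ξ'‖ := mul_one _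
    have hsum : (∑ m ∈ Finset.range r, w m * ‖Ξ'‖) + ∑ m ∈ Finset.Ico r M, w m * ‖Ξ'‖
        = ∑ m ∈ Finset.range M, w m * ‖Ξ'‖ :=
      Finset.sum_range_add_sum_Ico _ hrM
    have hle1 : ∑ m ∈ Finset.range M, w m * ‖Ξ'‖ ≤ ‖Ξ'‖ := by
      have h1' : ∑ m ∈ Finset.range M, w m * ‖Ξ'‖
          = (∑ m ∈ Finset.range M, w m) * ‖Ξ'‖ := by rw [Finset.sum_mul]
      rw [h1']
      have h2' : ∑ m ∈ Finset.range M, w m ≤ 1 := by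
        have := Summable.sum_le_tsum (Finset.range M) (fun m _ => hwn m) (hw_summable (v - t))
        rwa [(hw_hasSum (v - t)).tsum_eq] at this
      calc (∑ m ∈ Finset.range M, w m) * ‖Ξ'‖ ≤ 1 * ‖Ξ'‖ :=
            mul_le_mul_of_nonneg_right h2' (norm_nonneg _)
        _ = ‖Ξ'‖ := one_mul _
    calc |PsiStep M r Φ Φt i Ξ' t v|
        ≤ |∑ m ∈ Finset.range r, w m * Φ i m Ξ' (v - t) v|
          + |∑ m ∈ Finset.Ico r M, w m * Φt i m Ξ' (v - t) v| := abs_add_le _ _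
      _ ≤ (∑ m ∈ Finset.range r, w m * ‖Ξ'‖) + ∑ m ∈ Finset.Ico r M, w m * ‖Ξ'‖ :=
          add_le_add hbd1 hbd2
      _ = ∑ m ∈ Finset.range M, w m * ‖Ξ'‖ := hsum
      _ ≤ ‖Ξ'‖ := hle1
  -- linearity of PsiStep
  have hStepSub : ∀ (Ξ₁ Ξ₂ : Fin N → ℝ) (i : Fin N) (t v : ℝ), 0 ≤ t → t < v → v ≤ T →
      v - t < δ₀ → PsiStep M r Φ Φt i Ξ₁ t v - PsiStep M r Φ Φt i Ξ₂ t v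
        = PsiStep M r Φ Φt i (Ξ₁ - Ξ₂) t v := by
    intro Ξ₁ Ξ₂ i t v h0 h1 h2 h3
    have hζ : 0 < v - t := sub_pos.mpr h1
    have hζv : v - t ≤ v := by linarith
    unfold PsiStep
    rw [add_sub_add_comm, ← Finset.sum_sub_distrib, ← Finset.sum_sub_distrib]
    congr 1
    · refine Finset.sum_congr rfl fun m _ => ?_
      have heq : Φ i m (Ξ₁ - Ξ₂) (v - t) v = Φ i m Ξ₁ (v - t) v - Φ i m Ξ₂ (v - t) v := by
        have h2' := map_sub ((hΦlin i m (v - t) v hζ.le hζv h2).mk' _) Ξ₁ Ξ₂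
        simpa only [IsLinearMap.mk'_apply] using h2'
      rw [heq]; ring
    · refine Finset.sum_congr rfl fun m hm => ?_
      rw [Finset.mem_Ico] at hm
      have heq : Φt i m (Ξ₁ - Ξ₂) (v - t) v = Φt i m Ξ₁ (v - t) v - Φt i m Ξ₂ (v - t) v := by
        have h2' := map_sub ((hΦtlin i m (v - t) v hm.1 hm.2 hζ hζv h2 h3).mk' _) Ξ₁ Ξ₂
        simpa only [IsLinearMap.mk'_apply] using h2'
      rw [heq]; ring
  have hStepLip : ∀ (Ξ₁ Ξ₂ : Fin N → ℝ) (i : Fin N) (t v : ℝ), 0 ≤ t → t < v → v ≤ T →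
      v - t < δ₀ → |PsiStep M r Φ Φt i Ξ₁ t v - PsiStep M r Φ Φt i Ξ₂ t v| ≤ ‖Ξ₁ - Ξ₂‖ := by
    intro Ξ₁ Ξ₂ i t v h0 h1 h2 h3
    rw [hStepSub Ξ₁ Ξ₂ i t v h0 h1 h2 h3]
    exact hStepBound _ i t v h0 h1 h2 h3
  -- the one-step error bound
  have hOneStep : ∀ (Ξ' : Fin N → ℝ) (i : Fin N) (t v : ℝ), 0 ≤ t → t < v → v ≤ T →
      v - t < δ₀ → |Psi Φ i Ξ' t v - PsiStep M r Φ Φt i Ξ' t v|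
        ≤ (1 + B) * ‖Ξ'‖ * (v - t) ^ α := by
    intro Ξ' i t v h0 h1 h2 h3
    have hζ : 0 < v - t := sub_pos.mpr h1
    have hζv : v - t ≤ v := by linarith
    have hζ1 : v - t ≤ 1 := (h3.trans_le hδ₀1).le
    set ζ := v - t with hζdef
    set w : ℕ → ℝ := fun m => Real.exp (-ζ) * ζ ^ m / (Nat.factorial m : ℝ) with hw
    have hwn : ∀ m, 0 ≤ w m := hw_nonneg _ hζ.le
    have hsumm := hsummable Ξ' i t v h0 h1.le h2
    -- split Psi
    have hsplit : Psi Φ i Ξ' t v = (∑ m ∈ Finset.range M, w m * Φ i m Ξ' ζ v)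
        + ∑' m : ℕ, w (m + M) * Φ i (m + M) Ξ' ζ v := by
      unfold Psi
      exact (Summable.sum_add_tsum_nat_add M hsumm).symm
    have hrangesplit : ∑ m ∈ Finset.range M, w m * Φ i m Ξ' ζ v
        = (∑ m ∈ Finset.range r, w m * Φ i m Ξ' ζ v)
          + ∑ m ∈ Finset.Ico r M, w m * Φ i m Ξ' ζ v :=
      (Finset.sum_range_add_sum_Ico _ hrM).symm
    have hPsiStepEq : PsiStep M r Φ Φt i Ξ' t v
        = (∑ m ∈ Finset.range r, w m * Φ i m Ξ' ζ v)
          + ∑ m ∈ Finset.Ico r M, w m * Φt i m Ξ' ζ v := rfl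
    have hIcosub : ∑ m ∈ Finset.Ico r M, w m * (Φ i m Ξ' ζ v - Φt i m Ξ' ζ v)
        = (∑ m ∈ Finset.Ico r M, w m * Φ i m Ξ' ζ v)
          - ∑ m ∈ Finset.Ico r M, w m * Φt i m Ξ' ζ v := by
      rw [← Finset.sum_sub_distrib]
      exact Finset.sum_congr rfl fun m _ => by ring
    have hdiff : Psi Φ i Ξ' t v - PsiStep M r Φ Φt i Ξ' t v
        = (∑ m ∈ Finset.Ico r M, w m * (Φ i m Ξ' ζ v - Φt i m Ξ' ζ v))
          + ∑' m : ℕ, w (m + M) * Φ i (m + M) Ξ' ζ v := by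
      rw [hsplit, hrangesplit, hPsiStepEq, hIcosub]
      ring
    -- bound the middle term
    have hmid : |∑ m ∈ Finset.Ico r M, w m * (Φ i m Ξ' ζ v - Φt i m Ξ' ζ v)|
        ≤ B * ‖Ξ'‖ * ζ ^ α := by
      have hstep1 : |∑ m ∈ Finset.Ico r M, w m * (Φ i m Ξ' ζ v - Φt i m Ξ' ζ v)|
          ≤ ∑ m ∈ Finset.Ico r M, w m * (B * ‖Ξ'‖ * ζ ^ q) := by
        refine (Finset.abs_sum_le_sum_abs _ _).trans (Finset.sum_le_sum fun m hm => ?_)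
        rw [Finset.mem_Ico] at hm
        rw [abs_mul, abs_of_nonneg (hwn m), abs_sub_comm]
        exact mul_le_mul_of_nonneg_left
          (hΦterr i m Ξ' ζ v hm.1 hm.2 hζ hζv h2 h3) (hwn m)
      have hwsum : ∑ m ∈ Finset.Ico r M, w m ≤ ζ ^ r := by
        have h1' : ∑ m ∈ Finset.Ico r M, ζ ^ m / (Nat.factorial m : ℝ)
            ≤ ζ ^ r * Real.exp ζ := by
          rw [Finset.sum_Ico_eq_sum_range]
          have hterm : ∀ j ∈ Finset.range (M - r), ζ ^ (r + j) / (Nat.factorial (r + j) : ℝ)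
              ≤ ζ ^ r * (ζ ^ j / (Nat.factorial j : ℝ)) := by
            intro j _
            have hfac : (Nat.factorial j : ℝ) ≤ (Nat.factorial (r + j) : ℝ) := by
              exact_mod_cast Nat.factorial_le (Nat.le_add_left j r)
            calc ζ ^ (r + j) / (Nat.factorial (r + j) : ℝ)
                ≤ ζ ^ (r + j) / (Nat.factorial j : ℝ) :=
                  div_le_div_of_nonneg_left (pow_nonneg hζ.le _)
                    (by exact_mod_cast Nat.factorial_pos j) hfac
              _ = ζ ^ r * (ζ ^ j / (Nat.factorial j : ℝ)) := by rw [pow_add]; ring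
          refine (Finset.sum_le_sum hterm).trans ?_
          rw [← Finset.mul_sum]
          refine mul_le_mul_of_nonneg_left ?_ (pow_nonneg hζ.le r)
          have := Summable.sum_le_tsum (Finset.range (M - r))
            (fun j _ => by positivity) (Real.summable_pow_div_factorial ζ)
          rwa [hexp ζ] at this
        have h2' : ∑ m ∈ Finset.Ico r M, w m
            = Real.exp (-ζ) * ∑ m ∈ Finset.Ico r M, ζ ^ m / (Nat.factorial m : ℝ) := by
          rw [Finset.mul_sum]
          exact Finset.sum_congr rfl fun m _ => by rw [hw]; ring
        rw [h2']
        calc Real.exp (-ζ) * ∑ m ∈ Finset.Ico r M, ζ ^ m / (Nat.factorial m : ℝ)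
            ≤ Real.exp (-ζ) * (ζ ^ r * Real.exp ζ) :=
              mul_le_mul_of_nonneg_left h1' (Real.exp_pos _).le
          _ = ζ ^ r * (Real.exp (-ζ) * Real.exp ζ) := by ring
          _ = ζ ^ r := by rw [← Real.exp_add]; simp
      have hcomb : ∑ m ∈ Finset.Ico r M, w m * (B * ‖Ξ'‖ * ζ ^ q)
          ≤ ζ ^ r * (B * ‖Ξ'‖ * ζ ^ q) := by
        rw [← Finset.sum_mul]
        exact mul_le_mul_of_nonneg_right hwsum (by positivity)
      have hpow : ζ ^ r * (B * ‖Ξ'‖ * ζ ^ q) = B * ‖Ξ'‖ * ζ ^ ((r : ℝ) + q) := by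
        rw [Real.rpow_add hζ, ← Real.rpow_natCast ζ r]
        ring
      have hple : ζ ^ ((r : ℝ) + q) ≤ ζ ^ α :=
        Real.rpow_le_rpow_of_exponent_ge hζ hζ1 hαrq
      calc |∑ m ∈ Finset.Ico r M, w m * (Φ i m Ξ' ζ v - Φt i m Ξ' ζ v)|
          ≤ ∑ m ∈ Finset.Ico r M, w m * (B * ‖Ξ'‖ * ζ ^ q) := hstep1
        _ ≤ ζ ^ r * (B * ‖Ξ'‖ * ζ ^ q) := hcomb
        _ = B * ‖Ξ'‖ * ζ ^ ((r : ℝ) + q) := hpow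
        _ ≤ B * ‖Ξ'‖ * ζ ^ α :=
            mul_le_mul_of_nonneg_left hple (by positivity)
    -- bound the tail term
    have htail : |∑' m : ℕ, w (m + M) * Φ i (m + M) Ξ' ζ v| ≤ ‖Ξ'‖ * ζ ^ α := by
      have hg : HasSum (fun m : ℕ =>
          Real.exp (-ζ) * (ζ ^ M / (Nat.factorial M : ℝ))
            * (ζ ^ m / (Nat.factorial m : ℝ)) * ‖Ξ'‖)
          (Real.exp (-ζ) * (ζ ^ M / (Nat.factorial M : ℝ)) * Real.exp ζ * ‖Ξ'‖) :=
        ((hexpS ζ).mul_left _).mul_right _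
      have hbound : ∀ m : ℕ, ‖w (m + M) * Φ i (m + M) Ξ' ζ v‖
          ≤ Real.exp (-ζ) * (ζ ^ M / (Nat.factorial M : ℝ))
            * (ζ ^ m / (Nat.factorial m : ℝ)) * ‖Ξ'‖ := by
        intro m
        rw [Real.norm_eq_abs, abs_mul, abs_of_nonneg (hwn _)]
        have h1' : w (m + M) ≤ Real.exp (-ζ) * (ζ ^ M / (Nat.factorial M : ℝ))
            * (ζ ^ m / (Nat.factorial m : ℝ)) := by
          rw [hw]
          have hfac : (Nat.factorial M : ℝ) * (Nat.factorial m : ℝ)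
              ≤ (Nat.factorial (m + M) : ℝ) := by
            have := Nat.factorial_mul_factorial_dvd_factorial_add M m
            have hle := Nat.le_of_dvd (Nat.factorial_pos _) this
            rw [Nat.add_comm M m] at hle
            exact_mod_cast hle
          have hd : ζ ^ (m + M) / (Nat.factorial (m + M) : ℝ)
              ≤ ζ ^ (m + M) / ((Nat.factorial M : ℝ) * (Nat.factorial m : ℝ)) :=
            div_le_div_of_nonneg_left (pow_nonneg hζ.le _)
              (by positivity) hfac
          calc Real.exp (-ζ) * ζ ^ (m + M) / (Nat.factorial (m + M) : ℝ)
              = Real.exp (-ζ) * (ζ ^ (m + M) / (Nat.factorial (m + M) : ℝ)) := by ring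
            _ ≤ Real.exp (-ζ) * (ζ ^ (m + M)
                  / ((Nat.factorial M : ℝ) * (Nat.factorial m : ℝ))) :=
                mul_le_mul_of_nonneg_left hd (Real.exp_pos _).le
            _ = Real.exp (-ζ) * (ζ ^ M / (Nat.factorial M : ℝ))
                  * (ζ ^ m / (Nat.factorial m : ℝ)) := by
                rw [pow_add]; ring
        calc w (m + M) * |Φ i (m + M) Ξ' ζ v| ≤ w (m + M) * ‖Ξ'‖ :=
              mul_le_mul_of_nonneg_left (hΦabs i (m + M) Ξ' ζ v hζ.le hζv h2) (hwn _)
          _ ≤ Real.exp (-ζ) * (ζ ^ M / (Nat.factorial M : ℝ))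
                * (ζ ^ m / (Nat.factorial m : ℝ)) * ‖Ξ'‖ :=
              mul_le_mul_of_nonneg_right h1' (norm_nonneg _)
      have := tsum_of_norm_bounded hg hbound
      rw [Real.norm_eq_abs] at this
      refine this.trans ?_
      have hval : Real.exp (-ζ) * (ζ ^ M / (Nat.factorial M : ℝ)) * Real.exp ζ * ‖Ξ'‖
          = (ζ ^ M / (Nat.factorial M : ℝ)) * ‖Ξ'‖ := by
        rw [show Real.exp (-ζ) * (ζ ^ M / (Nat.factorial M : ℝ)) * Real.exp ζ
            = (Real.exp (-ζ) * Real.exp ζ) * (ζ ^ M / (Nat.factorial M : ℝ)) by ring,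
          ← Real.exp_add]
        simp
      rw [hval]
      have hfac1 : (1 : ℝ) ≤ (Nat.factorial M : ℝ) := by
        exact_mod_cast Nat.one_le_iff_ne_zero.mpr (Nat.factorial_pos M).ne'
      have h1' : ζ ^ M / (Nat.factorial M : ℝ) ≤ ζ ^ M := by
        rw [div_le_iff₀ (by linarith)]
        nlinarith [pow_nonneg hζ.le M]
      have h2' : (ζ : ℝ) ^ M ≤ ζ ^ α := by
        rw [← Real.rpow_natCast ζ M]
        exact Real.rpow_le_rpow_of_exponent_ge hζ hζ1 hαM
      calc (ζ ^ M / (Nat.factorial M : ℝ)) * ‖Ξ'‖ ≤ ζ ^ M * ‖Ξ'‖ :=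
            mul_le_mul_of_nonneg_right h1' (norm_nonneg _)
        _ ≤ ζ ^ α * ‖Ξ'‖ := mul_le_mul_of_nonneg_right h2' (norm_nonneg _)
        _ = ‖Ξ'‖ * ζ ^ α := by ring
    calc |Psi Φ i Ξ' t v - PsiStep M r Φ Φt i Ξ' t v|
        ≤ |∑ m ∈ Finset.Ico r M, w m * (Φ i m Ξ' ζ v - Φt i m Ξ' ζ v)|
          + |∑' m : ℕ, w (m + M) * Φ i (m + M) Ξ' ζ v| := by
          rw [hdiff]; exact abs_add_le _ _
      _ ≤ B * ‖Ξ'‖ * ζ ^ α + ‖Ξ'‖ * ζ ^ α := add_le_add hmid htail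
      _ = (1 + B) * ‖Ξ'‖ * ζ ^ α := by ring
  -- main induction
  have hδαpos : (0 : ℝ) < (T / k) ^ α := Real.rpow_pos_of_pos hδpos α
  have main : ∀ j : ℕ, j ≤ k - 1 → ∀ i : Fin N,
      |Psi Φ i Ξ (((k - 1 - j : ℕ) : ℝ) * (T / k)) T - PsiIter M r k T Φ Φt Ξ j i|
        ≤ ((j : ℝ) + 1) * ((1 + B) * ‖Ξ‖ * (T / k) ^ α) := by
    intro j
    induction j with
    | zero =>
      intro _ i
      simp only [PsiIter, Nat.sub_zero, Nat.cast_zero]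
      rw [zero_add, one_mul]
      have hkc : ((k - 1 : ℕ) : ℝ) = (k : ℝ) - 1 := by
        rw [Nat.cast_sub hk]; norm_num
      have ht0 : (0 : ℝ) ≤ ((k - 1 : ℕ) : ℝ) * (T / k) := by positivity
      have hvt : T - ((k - 1 : ℕ) : ℝ) * (T / k) = T / k := by
        rw [hkc]; field_simp; ring
      have htv : ((k - 1 : ℕ) : ℝ) * (T / k) < T := by
        have := hδpos; linarith [hvt]
      have h := hOneStep Ξ i (((k - 1 : ℕ) : ℝ) * (T / k)) T ht0 htv le_rfl
        (by rw [hvt]; exact hδ)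
      rwa [hvt] at h
    | succ j ih =>
      intro hj1 i
      have hj : j ≤ k - 1 := Nat.le_of_succ_le hj1
      have hn1 : k - 1 - j = (k - 1 - (j + 1)) + 1 := by omega
      set n := k - 1 - (j + 1) with hn
      have hnk : n + 1 ≤ k - 1 := by omega
      have hnk2 : ((n : ℝ) + 1) * (T / k) ≤ T := by
        have : (n : ℝ) + 1 ≤ (k : ℝ) := by
          have : n + 1 ≤ k := by omega
          exact_mod_cast this
        calc ((n : ℝ) + 1) * (T / k) ≤ (k : ℝ) * (T / k) :=
              mul_le_mul_of_nonneg_right this hδpos.le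
          _ = T := hkδ
      have ht0 : (0 : ℝ) ≤ (n : ℝ) * (T / k) := by positivity
      have htv : (n : ℝ) * (T / k) < ((n : ℝ) + 1) * (T / k) := by
        nlinarith [hδpos]
      have hvt : ((n : ℝ) + 1) * (T / k) - (n : ℝ) * (T / k) = T / k := by ring
      set s := ((n : ℝ) + 1) * (T / k) with hs
      set t := (n : ℝ) * (T / k) with htd
      have hcast : ((k - 1 - j : ℕ) : ℝ) = (n : ℝ) + 1 := by
        rw [hn1]; push_cast; ring
      -- semigroup step
      have hsg := hsemi i Ξ t s T ht0 htv.le hnk2 le_rfl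
      set Ξhat : Fin N → ℝ := fun ℓ => Psi Φ ℓ Ξ s T with hΞhat
      set Ξtil : Fin N → ℝ := PsiIter M r k T Φ Φt Ξ j with hΞtil
      have hIter : PsiIter M r k T Φ Φt Ξ (j + 1) i = PsiStep M r Φ Φt i Ξtil t s := by
        simp only [PsiIter]
        rw [← hΞtil, ← hn, hn1, htd, hs]
        push_cast
        ring_nf
      have hs0 : (0 : ℝ) ≤ s := by rw [hs]; positivity
      have hΞhatnorm : ‖Ξhat‖ ≤ ‖Ξ‖ := by
        rw [pi_norm_le_iff_of_nonneg (norm_nonneg Ξ)]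
        intro ℓ
        rw [Real.norm_eq_abs, hΞhat]
        exact hPsiBound Ξ ℓ s T hs0 hnk2 le_rfl
      have hdiffnorm : ‖Ξhat - Ξtil‖ ≤ ((j : ℝ) + 1) * ((1 + B) * ‖Ξ‖ * (T / k) ^ α) := by
        rw [pi_norm_le_iff_of_nonneg (by positivity)]
        intro ℓ
        rw [Pi.sub_apply, Real.norm_eq_abs, hΞhat, hΞtil]
        have h := ih hj ℓ
        rw [hcast] at h
        rw [hs]
        exact h
      have hstep := hOneStep Ξhat i t s ht0 htv hnk2 (by rw [hvt]; exact hδ)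
      rw [hvt] at hstep
      have hlip := hStepLip Ξhat Ξtil i t s ht0 htv hnk2 (by rw [hvt]; exact hδ)
      calc |Psi Φ i Ξ t T - PsiIter M r k T Φ Φt Ξ (j + 1) i|
          = |Psi Φ i Ξhat t s - PsiStep M r Φ Φt i Ξtil t s| := by
            rw [hsg, hIter]
        _ ≤ |Psi Φ i Ξhat t s - PsiStep M r Φ Φt i Ξhat t s|
            + |PsiStep M r Φ Φt i Ξhat t s - PsiStep M r Φ Φt i Ξtil t s| :=
            abs_sub_le _ _ _
        _ ≤ (1 + B) * ‖Ξhat‖ * (T / k) ^ α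
            + ((j : ℝ) + 1) * ((1 + B) * ‖Ξ‖ * (T / k) ^ α) :=
            add_le_add hstep (hlip.trans hdiffnorm)
        _ ≤ (1 + B) * ‖Ξ‖ * (T / k) ^ α
            + ((j : ℝ) + 1) * ((1 + B) * ‖Ξ‖ * (T / k) ^ α) := by
            have h1B : (0 : ℝ) ≤ 1 + B := by linarith
            have hmono : (1 + B) * ‖Ξhat‖ * (T / k) ^ α ≤ (1 + B) * ‖Ξ‖ * (T / k) ^ α :=
              mul_le_mul_of_nonneg_right
                (mul_le_mul_of_nonneg_left hΞhatnorm h1B) hδαpos.le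
            linarith
        _ = (((j : ℝ) + 1) + 1) * ((1 + B) * ‖Ξ‖ * (T / k) ^ α) := by ring
        _ = (((j + 1 : ℕ) : ℝ) + 1) * ((1 + B) * ‖Ξ‖ * (T / k) ^ α) := by push_cast; ring
  -- conclude
  have hfin := main (k - 1) le_rfl i
  have hzero : ((k - 1 - (k - 1) : ℕ) : ℝ) * (T / k) = 0 := by simp
  rw [hzero] at hfin
  have hkc : ((k - 1 : ℕ) : ℝ) + 1 = (k : ℝ) := by
    rw [Nat.cast_sub hk]; norm_num
  rw [hkc] at hfin
  refine hfin.trans (le_of_eq ?_)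
  have hkα : (k : ℝ) ^ (α - 1) = (k : ℝ) ^ α / (k : ℝ) := by
    rw [Real.rpow_sub hkR, Real.rpow_one]
  have hdk : (T / k) ^ α = T ^ α / (k : ℝ) ^ α :=
    Real.div_rpow hT.le hkR.le α
  rw [hdk, hkα]
  have hkαne : ((k : ℝ) ^ α) ≠ 0 := (Real.rpow_pos_of_pos hkR α).ne'
  field_simp
end

section
/- Under the abstract pricing framework and the backward algorithm defined in the context, but with the approximation stability hypothesis |Φ̃_{i,m}[Ξ](ζ;v)| ≤ ‖Ξ‖∞·Φ_{i,m}[𝟙](ζ;v) replaced by the milder condition |Φ̃_{i,m}[Ξ](ζ;v)| ≤ C‖Ξ‖∞ for a constant C < ∞, there exists a constant E < ∞ (depending only on B, C, T, M, r, q and ‖Ξ‖∞) such that for every positive integer k with δ := T/k < δ₀ and every i ∈ {1,…,N}, |Ψ_i[Ξ](0;T) − Ψ̃^{(M,r,k)}_i[Ξ](0;T)| ≤ E·T^α/k^{α−1}, where α := min(r+q, M). -/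
open MeasureTheory Finset

lemma tsum_pow_div_factorial (x : ℝ) :
    ∑' n : ℕ, x ^ n / (Nat.factorial n : ℝ) = Real.exp x := by
  rw [Real.exp_eq_exp_ℝ, NormedSpace.exp_eq_tsum_div]

lemma poisson_summable (ζ K : ℝ) (X : ℕ → ℝ) (hX : ∀ m, |X m| ≤ K) :
    Summable (fun m : ℕ => Real.exp (-ζ) * ζ ^ m / (Nat.factorial m : ℝ) * X m) := by
  apply Summable.of_norm_bounded
    (g := fun m : ℕ => (Real.exp (-ζ) * K) * (|ζ| ^ m / (Nat.factorial m : ℝ)))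
  · exact (Real.summable_pow_div_factorial |ζ|).mul_left _
  · intro m
    have h1 : 0 ≤ K := (abs_nonneg _).trans (hX m)
    have : ‖Real.exp (-ζ) * ζ ^ m / (Nat.factorial m : ℝ) * X m‖
        = Real.exp (-ζ) * |ζ| ^ m / (Nat.factorial m : ℝ) * |X m| := by
      rw [Real.norm_eq_abs]
      rw [abs_mul, abs_div, abs_mul, abs_pow, abs_of_pos (Real.exp_pos _),
        Nat.abs_cast]
    rw [this]
    have hfac : (0:ℝ) < (Nat.factorial m : ℝ) := by positivity
    calc Real.exp (-ζ) * |ζ| ^ m / (Nat.factorial m : ℝ) * |X m|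
        ≤ Real.exp (-ζ) * |ζ| ^ m / (Nat.factorial m : ℝ) * K := by
          apply mul_le_mul_of_nonneg_left (hX m); positivity
      _ = Real.exp (-ζ) * K * (|ζ| ^ m / (Nat.factorial m : ℝ)) := by ring

lemma poisson_weight_tsum (ζ : ℝ) :
    ∑' m : ℕ, Real.exp (-ζ) * ζ ^ m / (Nat.factorial m : ℝ) = 1 := by
  have : ∀ m : ℕ, Real.exp (-ζ) * ζ ^ m / (Nat.factorial m : ℝ)
      = Real.exp (-ζ) * (ζ ^ m / (Nat.factorial m : ℝ)) := fun m => by ring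
  simp only [this]
  rw [tsum_mul_left, tsum_pow_div_factorial, ← Real.exp_add]
  simp

lemma poisson_tsum_abs_le (ζ K : ℝ) (hζ : 0 ≤ ζ) (X : ℕ → ℝ) (hX : ∀ m, |X m| ≤ K) :
    |∑' m : ℕ, Real.exp (-ζ) * ζ ^ m / (Nat.factorial m : ℝ) * X m| ≤ K := by
  have hK : 0 ≤ K := (abs_nonneg _).trans (hX 0)
  have hs := poisson_summable ζ K X hX
  have habs : Summable (fun m : ℕ => ‖Real.exp (-ζ) * ζ ^ m / (Nat.factorial m : ℝ) * X m‖) :=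
    hs.abs
  refine (norm_tsum_le_tsum_norm habs).trans ?_
  have hw : Summable (fun m : ℕ => Real.exp (-ζ) * ζ ^ m / (Nat.factorial m : ℝ) * K) :=
    poisson_summable ζ K (fun _ => K) (fun _ => le_of_eq (abs_of_nonneg hK))
  refine le_trans (Summable.tsum_le_tsum ?_ habs hw) ?_
  · intro m
    have hg : 0 ≤ Real.exp (-ζ) * ζ ^ m / (Nat.factorial m : ℝ) := by positivity
    rw [Real.norm_eq_abs, abs_mul, abs_of_nonneg hg]
    exact mul_le_mul_of_nonneg_left (hX m) hg
  · have : ∀ m : ℕ, Real.exp (-ζ) * ζ ^ m / (Nat.factorial m : ℝ) * K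
        = K * (Real.exp (-ζ) * ζ ^ m / (Nat.factorial m : ℝ)) := fun m => by ring
    simp only [this]
    rw [tsum_mul_left, poisson_weight_tsum ζ, mul_one]

lemma poisson_weight_le (ζ : ℝ) (hζ0 : 0 ≤ ζ) (hζ1 : ζ ≤ 1) (m : ℕ) :
    Real.exp (-ζ) * ζ ^ m / (Nat.factorial m : ℝ) ≤ ζ ^ m := by
  have h1 : Real.exp (-ζ) ≤ 1 := Real.exp_le_one_iff.mpr (by linarith)
  have h2 : (1:ℝ) ≤ (Nat.factorial m : ℝ) := by
    exact_mod_cast Nat.one_le_iff_ne_zero.mpr (Nat.factorial_ne_zero m)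
  have h3 : 0 ≤ ζ ^ m := pow_nonneg hζ0 m
  calc Real.exp (-ζ) * ζ ^ m / (Nat.factorial m : ℝ)
      ≤ 1 * ζ ^ m / 1 := by
        apply div_le_div₀ (by positivity) (by nlinarith) one_pos h2
    _ = ζ ^ m := by ring

lemma one_step_err {N : ℕ} (Φ Φt : Fin N → ℕ → (Fin N → ℝ) → ℝ → ℝ → ℝ)
    (M r : ℕ) (hr : 1 ≤ r) (hrM : r ≤ M) (q : ℝ) (hq : 1 ≤ q) (B : ℝ) (hB : 0 ≤ B)
    (i : Fin N) (Ξ : Fin N → ℝ) (t v : ℝ)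
    (ht : 0 ≤ t) (htv : t < v) (hζ1 : v - t ≤ 1)
    (hΦbd1 : ∀ m, |Φ i m Ξ (v - t) v| ≤ ‖Ξ‖)
    (hΦterr1 : ∀ m, r ≤ m → m < M →
      |Φt i m Ξ (v - t) v - Φ i m Ξ (v - t) v| ≤ B * ‖Ξ‖ * (v - t) ^ q) :
    |Psi Φ i Ξ t v - PsiStep M r Φ Φt i Ξ t v|
      ≤ (M * B + 3) * ‖Ξ‖ * (v - t) ^ (min ((r:ℝ) + q) (M:ℝ)) := by
  set ζ : ℝ := v - t with hζdef
  set α : ℝ := min ((r:ℝ) + q) (M:ℝ) with hα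
  have hζpos : 0 < ζ := by simp [hζdef]; linarith
  have hζ0 : 0 ≤ ζ := hζpos.le
  have hΞ : 0 ≤ ‖Ξ‖ := norm_nonneg _
  set g : ℕ → ℝ := fun m => Real.exp (-ζ) * ζ ^ m / (Nat.factorial m : ℝ) with hg
  set f : ℕ → ℝ := fun m => g m * Φ i m Ξ ζ v with hf
  have hsum : Summable f := poisson_summable ζ ‖Ξ‖ _ hΦbd1
  have hsplit : ∑ m ∈ range M, f m + ∑' m : ℕ, f (m + M) = ∑' m, f m :=
    Summable.sum_add_tsum_nat_add M hsum
  have hPsi : Psi Φ i Ξ t v = ∑' m, f m := rfl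
  have hranges : ∑ m ∈ range r, f m + ∑ m ∈ Ico r M, f m = ∑ m ∈ range M, f m :=
    Finset.sum_range_add_sum_Ico f hrM
  have hdiff : Psi Φ i Ξ t v - PsiStep M r Φ Φt i Ξ t v
      = (∑ m ∈ Ico r M, g m * (Φ i m Ξ ζ v - Φt i m Ξ ζ v)) + ∑' m : ℕ, f (m + M) := by
    rw [hPsi, ← hsplit, ← hranges]
    have : PsiStep M r Φ Φt i Ξ t v
        = ∑ m ∈ range r, f m + ∑ m ∈ Ico r M, g m * Φt i m Ξ ζ v := rfl
    rw [this]
    have hsub : ∑ m ∈ Ico r M, f m - ∑ m ∈ Ico r M, g m * Φt i m Ξ ζ v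
        = ∑ m ∈ Ico r M, g m * (Φ i m Ξ ζ v - Φt i m Ξ ζ v) := by
      rw [← Finset.sum_sub_distrib]
      apply Finset.sum_congr rfl; intro m _; simp only [hf]; ring
    linarith [hsub]
  rw [hdiff]
  have hζα_pos : (0:ℝ) ≤ ζ ^ α := Real.rpow_nonneg hζ0 α
  have hT1 : |∑ m ∈ Ico r M, g m * (Φ i m Ξ ζ v - Φt i m Ξ ζ v)|
      ≤ M * (B * ‖Ξ‖ * ζ ^ α) := by
    refine (Finset.abs_sum_le_sum_abs _ _).trans ?_
    have hterm : ∀ m ∈ Ico r M, |g m * (Φ i m Ξ ζ v - Φt i m Ξ ζ v)| ≤ B * ‖Ξ‖ * ζ ^ α := by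
      intro m hm
      obtain ⟨hm1, hm2⟩ := Finset.mem_Ico.mp hm
      have hgm : 0 ≤ g m := by simp only [hg]; positivity
      have h1 : |g m * (Φ i m Ξ ζ v - Φt i m Ξ ζ v)| = g m * |Φt i m Ξ ζ v - Φ i m Ξ ζ v| := by
        rw [abs_mul, abs_of_nonneg hgm, abs_sub_comm]
      rw [h1]
      have h2 : g m ≤ ζ ^ r := (poisson_weight_le ζ hζ0 hζ1 m).trans
        (pow_le_pow_of_le_one hζ0 hζ1 hm1)
      have h3 := hΦterr1 m hm1 hm2
      have h4 : g m * |Φt i m Ξ ζ v - Φ i m Ξ ζ v| ≤ ζ ^ r * (B * ‖Ξ‖ * ζ ^ q) :=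
        mul_le_mul h2 h3 (abs_nonneg _) (pow_nonneg hζ0 r)
      refine h4.trans ?_
      have h5 : ζ ^ r * (B * ‖Ξ‖ * ζ ^ q) = B * ‖Ξ‖ * (ζ ^ ((r:ℝ) + q)) := by
        rw [Real.rpow_add hζpos, Real.rpow_natCast]; ring
      rw [h5]
      have h6 : ζ ^ ((r:ℝ) + q) ≤ ζ ^ α :=
        Real.rpow_le_rpow_of_exponent_ge hζpos hζ1 (min_le_left _ _)
      nlinarith [mul_nonneg hB hΞ]
    refine (Finset.sum_le_sum hterm).trans ?_
    rw [Finset.sum_const, nsmul_eq_mul]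
    have hcard : ((Ico r M).card : ℝ) ≤ (M : ℝ) := by
      rw [Nat.card_Ico]; exact_mod_cast Nat.sub_le M r
    nlinarith [mul_nonneg (mul_nonneg hB hΞ) hζα_pos]
  have htail_sum : Summable (fun m : ℕ => f (m + M)) := (summable_nat_add_iff M).mpr hsum
  have hbig : Summable (fun m : ℕ => (‖Ξ‖ * ζ ^ M) * (ζ ^ m / (Nat.factorial m : ℝ))) :=
    (Real.summable_pow_div_factorial ζ).mul_left _
  have habs : Summable (fun m : ℕ => ‖f (m + M)‖) := htail_sum.norm
  have hT2 : |∑' m : ℕ, f (m + M)| ≤ 3 * (‖Ξ‖ * ζ ^ α) := by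
    refine (norm_tsum_le_tsum_norm habs).trans ?_
    refine le_trans (Summable.tsum_le_tsum ?_ habs hbig) ?_
    · intro m
      have hexp : Real.exp (-ζ) ≤ 1 := Real.exp_le_one_iff.mpr (by linarith)
      have hfpos : (0:ℝ) < (Nat.factorial m : ℝ) := by positivity
      have hfle : (Nat.factorial m : ℝ) ≤ (Nat.factorial (m + M) : ℝ) := by
        exact_mod_cast Nat.factorial_le (Nat.le_add_right m M)
      have hgb : g (m + M) ≤ ζ ^ M * (ζ ^ m / (Nat.factorial m : ℝ)) := by
        have h7 : g (m + M) ≤ ζ ^ (m + M) / (Nat.factorial m : ℝ) := by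
          apply div_le_div₀ (by positivity) ?_ hfpos hfle
          nlinarith [pow_nonneg hζ0 (m + M)]
        refine h7.trans (le_of_eq ?_)
        rw [pow_add]; ring
      have hgnn : 0 ≤ g (m + M) := by simp only [hg]; positivity
      have : ‖f (m + M)‖ = g (m + M) * |Φ i (m + M) Ξ ζ v| := by
        rw [Real.norm_eq_abs, abs_mul, abs_of_nonneg hgnn]
      rw [this]
      calc g (m + M) * |Φ i (m + M) Ξ ζ v| ≤ (ζ ^ M * (ζ ^ m / (Nat.factorial m : ℝ))) * ‖Ξ‖ :=
            mul_le_mul hgb (hΦbd1 _) (abs_nonneg _) (by positivity)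
        _ = ‖Ξ‖ * ζ ^ M * (ζ ^ m / (Nat.factorial m : ℝ)) := by ring
    · rw [tsum_mul_left, tsum_pow_div_factorial]
      have hexp3 : Real.exp ζ ≤ 3 := by
        refine (Real.exp_le_exp.mpr hζ1).trans ?_
        exact Real.exp_one_lt_d9.le.trans (by norm_num)
      have hζM : (ζ : ℝ) ^ M ≤ ζ ^ α := by
        rw [← Real.rpow_natCast ζ M]
        exact Real.rpow_le_rpow_of_exponent_ge hζpos hζ1 (min_le_right _ _)
      have hexp0 : 0 ≤ Real.exp ζ := (Real.exp_pos _).le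
      have hζMnn : (0:ℝ) ≤ ζ ^ M := pow_nonneg hζ0 M
      nlinarith [mul_nonneg hΞ hζMnn, mul_nonneg hΞ hζα_pos]
  calc |∑ m ∈ Ico r M, g m * (Φ i m Ξ ζ v - Φt i m Ξ ζ v) + ∑' m : ℕ, f (m + M)|
      ≤ |∑ m ∈ Ico r M, g m * (Φ i m Ξ ζ v - Φt i m Ξ ζ v)| + |∑' m : ℕ, f (m + M)| :=
        abs_add_le _ _
    _ ≤ M * (B * ‖Ξ‖ * ζ ^ α) + 3 * (‖Ξ‖ * ζ ^ α) := add_le_add hT1 hT2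
    _ = (M * B + 3) * ‖Ξ‖ * ζ ^ α := by ring

lemma step_bound {N : ℕ} (Φ Φt : Fin N → ℕ → (Fin N → ℝ) → ℝ → ℝ → ℝ)
    (M r : ℕ) (hr : 1 ≤ r) (C : ℝ) (hC : 0 ≤ C)
    (i : Fin N) (Ξ : Fin N → ℝ) (t v : ℝ)
    (ht : 0 ≤ t) (htv : t < v) (hζ1 : v - t ≤ 1)
    (hΦbd1 : ∀ m, |Φ i m Ξ (v - t) v| ≤ ‖Ξ‖)
    (hΦtbd1 : ∀ m, r ≤ m → m < M → |Φt i m Ξ (v - t) v| ≤ C * ‖Ξ‖) :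
    |PsiStep M r Φ Φt i Ξ t v| ≤ (1 + C * M * (v - t)) * ‖Ξ‖ := by
  set ζ : ℝ := v - t with hζdef
  have hζpos : 0 < ζ := by simp [hζdef]; linarith
  have hζ0 : 0 ≤ ζ := hζpos.le
  have hΞ : 0 ≤ ‖Ξ‖ := norm_nonneg _
  set g : ℕ → ℝ := fun m => Real.exp (-ζ) * ζ ^ m / (Nat.factorial m : ℝ) with hg
  have hS1 : |∑ m ∈ range r, g m * Φ i m Ξ ζ v| ≤ ‖Ξ‖ := by
    refine (Finset.abs_sum_le_sum_abs _ _).trans ?_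
    have hterm : ∀ m ∈ range r, |g m * Φ i m Ξ ζ v| ≤ g m * ‖Ξ‖ := by
      intro m _
      have hgm : 0 ≤ g m := by simp only [hg]; positivity
      rw [abs_mul, abs_of_nonneg hgm]
      exact mul_le_mul_of_nonneg_left (hΦbd1 m) hgm
    refine (Finset.sum_le_sum hterm).trans ?_
    rw [← Finset.sum_mul]
    have hsum1 : ∑ m ∈ range r, g m ≤ 1 := by
      have hfac : ∑ m ∈ range r, g m = Real.exp (-ζ) * ∑ m ∈ range r, ζ ^ m / (Nat.factorial m : ℝ) := by
        rw [Finset.mul_sum]; apply Finset.sum_congr rfl; intro m _; simp only [hg]; ring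
      rw [hfac]
      have h1 := Real.sum_le_exp_of_nonneg hζ0 r
      have h2 : Real.exp (-ζ) * Real.exp ζ = 1 := by rw [← Real.exp_add]; simp
      nlinarith [Real.exp_pos (-ζ)]
    nlinarith
  have hS2 : |∑ m ∈ Ico r M, g m * Φt i m Ξ ζ v| ≤ C * M * ζ * ‖Ξ‖ := by
    refine (Finset.abs_sum_le_sum_abs _ _).trans ?_
    have hterm : ∀ m ∈ Ico r M, |g m * Φt i m Ξ ζ v| ≤ ζ * (C * ‖Ξ‖) := by
      intro m hm
      obtain ⟨hm1, hm2⟩ := Finset.mem_Ico.mp hm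
      have hgm : 0 ≤ g m := by simp only [hg]; positivity
      rw [abs_mul, abs_of_nonneg hgm]
      have h2 : g m ≤ ζ := by
        refine (poisson_weight_le ζ hζ0 hζ1 m).trans ?_
        calc ζ ^ m ≤ ζ ^ 1 := pow_le_pow_of_le_one hζ0 hζ1 (hr.trans hm1)
          _ = ζ := pow_one ζ
      exact mul_le_mul h2 (hΦtbd1 m hm1 hm2) (abs_nonneg _) hζ0
    refine (Finset.sum_le_sum hterm).trans ?_
    rw [Finset.sum_const, nsmul_eq_mul]
    have hcard : ((Ico r M).card : ℝ) ≤ (M : ℝ) := by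
      rw [Nat.card_Ico]; exact_mod_cast Nat.sub_le M r
    nlinarith [mul_nonneg (mul_nonneg hζ0 hC) hΞ]
  calc |PsiStep M r Φ Φt i Ξ t v|
      ≤ |∑ m ∈ range r, g m * Φ i m Ξ ζ v| + |∑ m ∈ Ico r M, g m * Φt i m Ξ ζ v| := abs_add_le _ _
    _ ≤ ‖Ξ‖ + C * M * ζ * ‖Ξ‖ := add_le_add hS1 hS2
    _ = (1 + C * M * ζ) * ‖Ξ‖ := by ring

set_option maxHeartbeats 1000000 in
/-- **Corollary (error bound under the milder stability condition).** If the stability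
hypothesis `|Φ̃_{i,m}[Ξ]| ≤ ‖Ξ‖∞·Φ_{i,m}[𝟙]` is replaced by `|Φ̃_{i,m}[Ξ]| ≤ C‖Ξ‖∞`, then
there is a constant `E < ∞` such that for every `k` with `δ := T/k < δ₀` and every `i`,
`|Ψ_i[Ξ](0;T) − Ψ̃^{(M,r,k)}_i[Ξ](0;T)| ≤ E·T^α/k^{α−1}` with `α = min(r+q, M)`. -/
theorem poisson_algorithm_error_milder
    {N : ℕ} (hN : 0 < N) (T : ℝ) (hT : 0 < T)
    (Φ Φt : Fin N → ℕ → (Fin N → ℝ) → ℝ → ℝ → ℝ)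
    (hΦlin : ∀ (i : Fin N) (m : ℕ) (ζ v : ℝ), 0 ≤ ζ → ζ ≤ v → v ≤ T →
      IsLinearMap ℝ fun Ξ : Fin N → ℝ => Φ i m Ξ ζ v)
    (hΦone : ∀ (i : Fin N) (m : ℕ) (ζ v : ℝ), 0 ≤ ζ → ζ ≤ v → v ≤ T →
      Φ i m (fun _ => 1) ζ v ∈ Set.Icc (0 : ℝ) 1)
    (hΦbd : ∀ (i : Fin N) (m : ℕ) (Ξ : Fin N → ℝ) (ζ v : ℝ), 0 ≤ ζ → ζ ≤ v → v ≤ T →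
      |Φ i m Ξ ζ v| ≤ ‖Ξ‖ * Φ i m (fun _ => 1) ζ v)
    (hsemi : ∀ (i : Fin N) (Ξ : Fin N → ℝ) (t s v : ℝ), 0 ≤ t → t ≤ s → s ≤ v → v ≤ T →
      Psi Φ i Ξ t v = Psi Φ i (fun ℓ => Psi Φ ℓ Ξ s v) t s)
    (M r : ℕ) (hM : 1 ≤ M) (hr : 1 ≤ r) (hrM : r ≤ M)
    (q : ℝ) (hq : 1 ≤ q) (B C : ℝ) (hB : 0 ≤ B) (hC : 0 ≤ C)
    (δ₀ : ℝ) (hδ₀pos : 0 < δ₀) (hδ₀le : δ₀ ≤ min T 1)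
    (hΦtlin : ∀ (i : Fin N) (m : ℕ) (ζ v : ℝ), r ≤ m → m < M →
      0 < ζ → ζ ≤ v → v ≤ T → ζ < δ₀ →
      IsLinearMap ℝ fun Ξ : Fin N → ℝ => Φt i m Ξ ζ v)
    (hΦterr : ∀ (i : Fin N) (m : ℕ) (Ξ : Fin N → ℝ) (ζ v : ℝ), r ≤ m → m < M →
      0 < ζ → ζ ≤ v → v ≤ T → ζ < δ₀ →
      |Φt i m Ξ ζ v - Φ i m Ξ ζ v| ≤ B * ‖Ξ‖ * ζ ^ q)
    (hΦtbd : ∀ (i : Fin N) (m : ℕ) (Ξ : Fin N → ℝ) (ζ v : ℝ), r ≤ m → m < M →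
      0 < ζ → ζ ≤ v → v ≤ T → ζ < δ₀ →
      |Φt i m Ξ ζ v| ≤ C * ‖Ξ‖)
    (Ξ : Fin N → ℝ) :
    ∃ E : ℝ, ∀ (k : ℕ), 0 < k → T / k < δ₀ → ∀ i : Fin N,
      |Psi Φ i Ξ 0 T - PsiIter M r k T Φ Φt Ξ (k - 1) i|
        ≤ E * T ^ (min ((r : ℝ) + q) (M : ℝ))
            / (k : ℝ) ^ (min ((r : ℝ) + q) (M : ℝ) - 1) := by
  have hδ₀1 : δ₀ ≤ 1 := hδ₀le.trans (min_le_right _ _)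
  set α : ℝ := min ((r : ℝ) + q) (M : ℝ) with hαdef
  -- pointwise bound on Φ
  have hbound : ∀ (i : Fin N) (m : ℕ) (Ξ' : Fin N → ℝ) (ζ v : ℝ), 0 ≤ ζ → ζ ≤ v → v ≤ T →
      |Φ i m Ξ' ζ v| ≤ ‖Ξ'‖ := by
    intro i m Ξ' ζ v h1 h2 h3
    refine (hΦbd i m Ξ' ζ v h1 h2 h3).trans ?_
    have h4 := (hΦone i m ζ v h1 h2 h3).2
    have h5 := (hΦone i m ζ v h1 h2 h3).1
    nlinarith [norm_nonneg Ξ']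
  -- contraction bound on Psi
  have hPsiBd : ∀ (i : Fin N) (Ξ' : Fin N → ℝ) (t v : ℝ), 0 ≤ t → t ≤ v → v ≤ T →
      |Psi Φ i Ξ' t v| ≤ ‖Ξ'‖ := by
    intro i Ξ' t v h1 h2 h3
    exact poisson_tsum_abs_le (v - t) ‖Ξ'‖ (by linarith) _
      (fun m => hbound i m Ξ' (v - t) v (by linarith) (by linarith) h3)
  -- one-step error
  have hOne : ∀ (i : Fin N) (Ξ' : Fin N → ℝ) (t v : ℝ), 0 ≤ t → t < v → v ≤ T →
      v - t < δ₀ →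
      |Psi Φ i Ξ' t v - PsiStep M r Φ Φt i Ξ' t v| ≤ ((M : ℝ) * B + 3) * ‖Ξ'‖ * (v - t) ^ α := by
    intro i Ξ' t v ht htv hvT hζδ
    have hζ0 : (0:ℝ) < v - t := by linarith
    have hζ1 : v - t ≤ 1 := le_of_lt (lt_of_lt_of_le hζδ hδ₀1)
    exact one_step_err Φ Φt M r hr hrM q hq B hB i Ξ' t v ht htv hζ1
      (fun m => hbound i m Ξ' (v - t) v hζ0.le (by linarith) hvT)
      (fun m hm1 hm2 => hΦterr i m Ξ' (v - t) v hm1 hm2 hζ0 (by linarith) hvT hζδ)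
  -- Lipschitz property of PsiStep
  have hLip : ∀ (i : Fin N) (Ξ₁ Ξ₂ : Fin N → ℝ) (t v : ℝ), 0 ≤ t → t < v → v ≤ T →
      v - t < δ₀ →
      |PsiStep M r Φ Φt i Ξ₁ t v - PsiStep M r Φ Φt i Ξ₂ t v|
        ≤ (1 + C * M * (v - t)) * ‖Ξ₁ - Ξ₂‖ := by
    intro i Ξ₁ Ξ₂ t v ht htv hvT hζδ
    have hζ0 : (0:ℝ) < v - t := by linarith
    have hζ1 : v - t ≤ 1 := le_of_lt (lt_of_lt_of_le hζδ hδ₀1)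
    have hζv : v - t ≤ v := by linarith
    have heq : PsiStep M r Φ Φt i Ξ₁ t v - PsiStep M r Φ Φt i Ξ₂ t v
        = PsiStep M r Φ Φt i (Ξ₁ - Ξ₂) t v := by
      simp only [PsiStep]
      have hA : ∑ m ∈ Finset.range r,
            Real.exp (-(v - t)) * (v - t) ^ m / (Nat.factorial m : ℝ) * Φ i m Ξ₁ (v - t) v
          - ∑ m ∈ Finset.range r,
            Real.exp (-(v - t)) * (v - t) ^ m / (Nat.factorial m : ℝ) * Φ i m Ξ₂ (v - t) v
          = ∑ m ∈ Finset.range r,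
            Real.exp (-(v - t)) * (v - t) ^ m / (Nat.factorial m : ℝ)
              * Φ i m (Ξ₁ - Ξ₂) (v - t) v := by
        rw [← Finset.sum_sub_distrib]
        apply Finset.sum_congr rfl; intro m _
        rw [(hΦlin i m (v - t) v hζ0.le hζv hvT).map_sub Ξ₁ Ξ₂]; ring
      have hB' : ∑ m ∈ Finset.Ico r M,
            Real.exp (-(v - t)) * (v - t) ^ m / (Nat.factorial m : ℝ) * Φt i m Ξ₁ (v - t) v
          - ∑ m ∈ Finset.Ico r M,
            Real.exp (-(v - t)) * (v - t) ^ m / (Nat.factorial m : ℝ) * Φt i m Ξ₂ (v - t) v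
          = ∑ m ∈ Finset.Ico r M,
            Real.exp (-(v - t)) * (v - t) ^ m / (Nat.factorial m : ℝ)
              * Φt i m (Ξ₁ - Ξ₂) (v - t) v := by
        rw [← Finset.sum_sub_distrib]
        apply Finset.sum_congr rfl; intro m hm
        obtain ⟨hm1, hm2⟩ := Finset.mem_Ico.mp hm
        rw [(hΦtlin i m (v - t) v hm1 hm2 hζ0 hζv hvT hζδ).map_sub Ξ₁ Ξ₂]; ring
      linarith [hA, hB']
    rw [heq]
    exact step_bound Φ Φt M r hr C hC i (Ξ₁ - Ξ₂) t v ht htv hζ1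
      (fun m => hbound i m (Ξ₁ - Ξ₂) (v - t) v hζ0.le hζv hvT)
      (fun m hm1 hm2 => hΦtbd i m (Ξ₁ - Ξ₂) (v - t) v hm1 hm2 hζ0 hζv hvT hζδ)
  refine ⟨((M : ℝ) * B + 3) * ‖Ξ‖ * Real.exp (C * M * T), ?_⟩
  intro k hk hδ i
  set δ : ℝ := T / k with hδdef
  have hkpos : (0:ℝ) < k := Nat.cast_pos.mpr hk
  have hδpos : 0 < δ := div_pos hT hkpos
  have hδ1 : δ ≤ 1 := le_of_lt (lt_of_lt_of_le hδ hδ₀1)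
  have hkδ : (k:ℝ) * δ = T := by rw [hδdef]; field_simp [hkpos.ne']
  set u : ℝ := C * M * δ with hudef
  have hu0 : 0 ≤ u := by positivity
  set A : ℝ := ((M : ℝ) * B + 3) * ‖Ξ‖ * δ ^ α with hAdef
  have hMB3 : (0:ℝ) ≤ (M : ℝ) * B + 3 := by positivity
  have hδα0 : (0:ℝ) ≤ δ ^ α := Real.rpow_nonneg hδpos.le α
  have hA0 : 0 ≤ A := by positivity
  -- the key induction
  have claim : ∀ j : ℕ, j ≤ k - 1 → ∀ i' : Fin N,
      |Psi Φ i' Ξ (((k - 1 - j : ℕ) : ℝ) * δ) T - PsiIter M r k T Φ Φt Ξ j i'|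
        ≤ A * ((j : ℝ) + 1) * (1 + u) ^ j := by
    intro j
    induction j with
    | zero =>
      intro _ i'
      have hcast : ((k - 1 : ℕ) : ℝ) = (k : ℝ) - 1 := by
        have := Nat.cast_sub hk (R := ℝ); simpa using this
      have ht0 : (0:ℝ) ≤ ((k - 1 - 0 : ℕ) : ℝ) * δ := by positivity
      have hveq : T - ((k - 1 - 0 : ℕ) : ℝ) * δ = δ := by
        simp only [Nat.sub_zero, hcast]; nlinarith [hkδ]
      have htv : ((k - 1 - 0 : ℕ) : ℝ) * δ < T := by nlinarith [hveq, hδpos]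
      have h := hOne i' Ξ (((k - 1 - 0 : ℕ) : ℝ) * δ) T ht0 htv le_rfl (by rw [hveq]; exact hδ)
      rw [hveq] at h
      simp only [Nat.sub_zero] at h ⊢
      calc |Psi Φ i' Ξ (((k - 1 : ℕ) : ℝ) * δ) T - PsiIter M r k T Φ Φt Ξ 0 i'|
          = |Psi Φ i' Ξ (((k - 1 : ℕ) : ℝ) * δ) T
              - PsiStep M r Φ Φt i' Ξ (((k - 1 : ℕ) : ℝ) * δ) T| := rfl
        _ ≤ ((M : ℝ) * B + 3) * ‖Ξ‖ * δ ^ α := h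
        _ = A * (((0:ℕ) : ℝ) + 1) * (1 + u) ^ 0 := by rw [hAdef]; norm_num
    | succ j ih =>
      intro hjk i'
      have hjk' : j ≤ k - 1 := Nat.le_of_succ_le hjk
      set n : ℕ := k - 1 - j with hndef
      have hn1 : 1 ≤ n := by omega
      have hnk : n ≤ k := by omega
      have hkj1 : k - 1 - (j + 1) = n - 1 := by omega
      have hcast : ((n - 1 : ℕ) : ℝ) = (n : ℝ) - 1 := by
        have := Nat.cast_sub hn1 (R := ℝ); simpa using this
      set t : ℝ := ((n - 1 : ℕ) : ℝ) * δ with htdef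
      set s : ℝ := ((n : ℕ) : ℝ) * δ with hsdef
      have hst : s - t = δ := by rw [htdef, hsdef, hcast]; ring
      have ht0 : 0 ≤ t := by positivity
      have hts : t < s := by nlinarith [hst, hδpos]
      have hsT : s ≤ T := by
        rw [hsdef, ← hkδ]
        have : (n : ℝ) ≤ (k : ℝ) := Nat.cast_le.mpr hnk
        nlinarith [hδpos]
      set Ξhat : Fin N → ℝ := fun ℓ => Psi Φ ℓ Ξ s T with hΞhatdef
      have hs0 : 0 ≤ s := by positivity
      have hsg : Psi Φ i' Ξ t T = Psi Φ i' Ξhat t s :=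
        hsemi i' Ξ t s T ht0 hts.le hsT le_rfl
      have hΞhatbd : ‖Ξhat‖ ≤ ‖Ξ‖ := by
        rw [pi_norm_le_iff_of_nonneg (norm_nonneg Ξ)]
        intro ℓ
        rw [Real.norm_eq_abs]
        exact hPsiBd ℓ Ξ s T hs0 hsT le_rfl
      have hprev0 : (0:ℝ) ≤ A * ((j : ℝ) + 1) * (1 + u) ^ j := by positivity
      have hdiffbd : ‖Ξhat - PsiIter M r k T Φ Φt Ξ j‖ ≤ A * ((j : ℝ) + 1) * (1 + u) ^ j := by
        rw [pi_norm_le_iff_of_nonneg hprev0]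
        intro ℓ
        have := ih hjk' ℓ
        simpa [Real.norm_eq_abs, hΞhatdef, hsdef, hndef] using this
      have hIter : PsiIter M r k T Φ Φt Ξ (j + 1) i'
          = PsiStep M r Φ Φt i' (PsiIter M r k T Φ Φt Ξ j) t s := by
        simp only [PsiIter, htdef, hsdef, hkj1, hndef, hδdef]
      have h1 := hOne i' Ξhat t s ht0 hts hsT (by rw [hst]; exact hδ)
      have h2 := hLip i' Ξhat (PsiIter M r k T Φ Φt Ξ j) t s ht0 hts hsT (by rw [hst]; exact hδ)
      rw [hst] at h1 h2
      have h2' : |PsiStep M r Φ Φt i' Ξhat t s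
            - PsiStep M r Φ Φt i' (PsiIter M r k T Φ Φt Ξ j) t s|
          ≤ (1 + u) * (A * ((j : ℝ) + 1) * (1 + u) ^ j) := by
        refine h2.trans ?_
        rw [hudef]
        have h1u : (0:ℝ) ≤ 1 + C * M * δ := by positivity
        exact mul_le_mul_of_nonneg_left hdiffbd h1u
      have h1' : |Psi Φ i' Ξhat t s - PsiStep M r Φ Φt i' Ξhat t s| ≤ A := by
        refine h1.trans ?_
        rw [hAdef]
        have := mul_le_mul_of_nonneg_right
          (mul_le_mul_of_nonneg_left hΞhatbd hMB3) hδα0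
        linarith [this]
      have hone_le : (1:ℝ) ≤ (1 + u) ^ (j + 1) := by
        calc (1:ℝ) = 1 ^ (j + 1) := (one_pow _).symm
          _ ≤ (1 + u) ^ (j + 1) := pow_le_pow_left₀ zero_le_one (by linarith) _
      calc |Psi Φ i' Ξ (((k - 1 - (j + 1) : ℕ) : ℝ) * δ) T - PsiIter M r k T Φ Φt Ξ (j + 1) i'|
          = |Psi Φ i' Ξhat t s - PsiStep M r Φ Φt i' (PsiIter M r k T Φ Φt Ξ j) t s| := by
            rw [hIter, hkj1, ← htdef, hsg]
        _ ≤ |Psi Φ i' Ξhat t s - PsiStep M r Φ Φt i' Ξhat t s|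
            + |PsiStep M r Φ Φt i' Ξhat t s
                - PsiStep M r Φ Φt i' (PsiIter M r k T Φ Φt Ξ j) t s| := abs_sub_le _ _ _
        _ ≤ A + (1 + u) * (A * ((j : ℝ) + 1) * (1 + u) ^ j) := add_le_add h1' h2'
        _ ≤ A * (((j + 1 : ℕ) : ℝ) + 1) * (1 + u) ^ (j + 1) := by
            push_cast
            have key : A ≤ A * (1 + u) ^ (j + 1) := by
              nlinarith [mul_nonneg hA0 (sub_nonneg.mpr hone_le)]
            calc A + (1 + u) * (A * ((j:ℝ) + 1) * (1 + u) ^ j)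
                ≤ A * (1 + u) ^ (j + 1) + (1 + u) * (A * ((j:ℝ) + 1) * (1 + u) ^ j) := by
                  linarith [key]
              _ = A * ((j:ℝ) + 1 + 1) * (1 + u) ^ (j + 1) := by ring
  -- conclude
  have hmain := claim (k - 1) le_rfl i
  simp only [Nat.sub_self, Nat.cast_zero, zero_mul] at hmain
  have hck : ((k - 1 : ℕ) : ℝ) + 1 = (k : ℝ) := by
    have : ((k - 1 : ℕ) : ℝ) = (k : ℝ) - 1 := by
      have := Nat.cast_sub hk (R := ℝ); simpa using this
    rw [this]; ring
  rw [hck] at hmain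
  have hexp : (1 + u) ^ (k - 1) ≤ Real.exp (C * M * T) := by
    have h1 : (1 + u) ^ (k - 1) ≤ (1 + u) ^ k :=
      pow_le_pow_right₀ (by linarith) (Nat.sub_le k 1)
    have h2 : (1 + u) ^ k ≤ Real.exp u ^ k := by
      apply pow_le_pow_left₀ (by linarith)
      linarith [Real.add_one_le_exp u]
    have h3 : Real.exp u ^ k = Real.exp (u * k) := by
      rw [← Real.exp_nat_mul]; ring_nf
    have h4 : u * k = C * M * T := by rw [hudef]; nlinarith [hkδ]
    calc (1 + u) ^ (k - 1) ≤ Real.exp u ^ k := h1.trans h2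
      _ = Real.exp (C * M * T) := by rw [h3, h4]
  have hδαk : δ ^ α * (k : ℝ) = T ^ α / (k : ℝ) ^ (α - 1) := by
    have h5 : δ ^ α = T ^ α / (k : ℝ) ^ α := by
      rw [hδdef]; exact Real.div_rpow hT.le (Nat.cast_nonneg k) α
    have h6 : (k : ℝ) ^ (α - 1) = (k : ℝ) ^ α / (k : ℝ) := by
      rw [Real.rpow_sub hkpos, Real.rpow_one]
    rw [h5, h6]
    have h7 : (k : ℝ) ^ α ≠ 0 := ne_of_gt (Real.rpow_pos_of_pos hkpos α)
    field_simp
  refine hmain.trans ?_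
  have hfinal : A * (k : ℝ) * (1 + u) ^ (k - 1)
      ≤ ((M : ℝ) * B + 3) * ‖Ξ‖ * Real.exp (C * M * T) * (δ ^ α * (k : ℝ)) := by
    rw [hAdef]
    have hpow0 : (0:ℝ) ≤ (1 + u) ^ (k - 1) := pow_nonneg (by linarith) _
    nlinarith [mul_nonneg (mul_nonneg hMB3 (norm_nonneg Ξ)) hδα0, hkpos.le,
      mul_nonneg (mul_nonneg (mul_nonneg hMB3 (norm_nonneg Ξ)) hδα0) hkpos.le]
  refine hfinal.trans ?_
  rw [hδαk]
  rw [mul_div_assoc]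
end

section
/- Under the abstract pricing framework and the approximation scheme defined in the context, for every payoff Ξ, every 0 < δ < δ₀ and every i ∈ {1,…,N}, the one-step approximation satisfies |Ψ̃^{(M,r)}_i[Ξ](T−δ;T) − Ψ_i[Ξ](T−δ;T)| ≤ (1+B)·‖Ξ‖∞·δ^{min(r+q,M)}. -/
private lemma exp_tsum_pow_div' (δ : ℝ) :
    ∑' n : ℕ, δ ^ n / (Nat.factorial n : ℝ) = Real.exp δ := by
  rw [Real.exp_eq_exp_ℝ, NormedSpace.exp_eq_tsum_div]

private lemma w_summable' (δ : ℝ) (c : ℝ) :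
    Summable (fun n : ℕ => c * δ ^ n / (Nat.factorial n : ℝ)) := by
  simpa [mul_div_assoc] using (Real.summable_pow_div_factorial δ).mul_left c

private lemma exp_tail_le' (δ : ℝ) (hδ : 0 ≤ δ) (s : ℕ) :
    ∑' n : ℕ, Real.exp (-δ) * δ ^ (n + s) / (Nat.factorial (n + s) : ℝ) ≤ δ ^ s := by
  have h1 : Summable (fun n : ℕ =>
      Real.exp (-δ) * δ ^ (n + s) / (Nat.factorial (n + s) : ℝ)) :=
    (w_summable' δ (Real.exp (-δ))).comp_injective (add_left_injective s)
  have h2 : Summable (fun n : ℕ =>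
      Real.exp (-δ) * δ ^ s * (δ ^ n / (Nat.factorial n : ℝ))) :=
    (Real.summable_pow_div_factorial δ).mul_left _
  have hle : ∀ n : ℕ, Real.exp (-δ) * δ ^ (n + s) / (Nat.factorial (n + s) : ℝ)
      ≤ Real.exp (-δ) * δ ^ s * (δ ^ n / (Nat.factorial n : ℝ)) := by
    intro n
    rw [pow_add]
    have hfact : (Nat.factorial n : ℝ) ≤ (Nat.factorial (n + s) : ℝ) := by
      exact_mod_cast Nat.factorial_le (Nat.le_add_right n s)
    have hnum : 0 ≤ Real.exp (-δ) * (δ ^ n * δ ^ s) := by positivity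
    calc Real.exp (-δ) * (δ ^ n * δ ^ s) / (Nat.factorial (n + s) : ℝ)
        ≤ Real.exp (-δ) * (δ ^ n * δ ^ s) / (Nat.factorial n : ℝ) := by
          apply div_le_div_of_nonneg_left hnum _ hfact
          exact_mod_cast Nat.factorial_pos n
      _ = Real.exp (-δ) * δ ^ s * (δ ^ n / (Nat.factorial n : ℝ)) := by ring
  calc ∑' n : ℕ, Real.exp (-δ) * δ ^ (n + s) / (Nat.factorial (n + s) : ℝ)
      ≤ ∑' n : ℕ, Real.exp (-δ) * δ ^ s * (δ ^ n / (Nat.factorial n : ℝ)) :=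
        Summable.tsum_le_tsum hle h1 h2
    _ = Real.exp (-δ) * δ ^ s * Real.exp δ := by
        rw [tsum_mul_left, exp_tsum_pow_div']
    _ = δ ^ s := by
        rw [mul_comm (Real.exp (-δ)) (δ ^ s), mul_assoc, ← Real.exp_add]
        simp




open MeasureTheory Finset

/-- **One-step approximation error.** Under the abstract pricing framework and the
approximation scheme, for every payoff `Ξ`, every `0 < δ < δ₀` and every regime `i`,
`|Ψ̃^{(M,r)}_i[Ξ](T−δ;T) − Ψ_i[Ξ](T−δ;T)| ≤ (1+B)·‖Ξ‖∞·δ^{min(r+q,M)}`. -/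
theorem poisson_one_step_error
    {N : ℕ} (hN : 0 < N) (T : ℝ) (hT : 0 < T)
    (Φ Φt : Fin N → ℕ → (Fin N → ℝ) → ℝ → ℝ → ℝ)
    (hΦlin : ∀ (i : Fin N) (m : ℕ) (ζ v : ℝ), 0 ≤ ζ → ζ ≤ v → v ≤ T →
      IsLinearMap ℝ fun Ξ : Fin N → ℝ => Φ i m Ξ ζ v)
    (hΦone : ∀ (i : Fin N) (m : ℕ) (ζ v : ℝ), 0 ≤ ζ → ζ ≤ v → v ≤ T →
      Φ i m (fun _ => 1) ζ v ∈ Set.Icc (0 : ℝ) 1)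
    (hΦbd : ∀ (i : Fin N) (m : ℕ) (Ξ : Fin N → ℝ) (ζ v : ℝ), 0 ≤ ζ → ζ ≤ v → v ≤ T →
      |Φ i m Ξ ζ v| ≤ ‖Ξ‖ * Φ i m (fun _ => 1) ζ v)
    (M r : ℕ) (hM : 1 ≤ M) (hr : 1 ≤ r) (hrM : r ≤ M)
    (q : ℝ) (hq : 1 ≤ q) (B : ℝ) (hB : 0 ≤ B)
    (δ₀ : ℝ) (hδ₀pos : 0 < δ₀) (hδ₀le : δ₀ ≤ min T 1)
    (hΦtlin : ∀ (i : Fin N) (m : ℕ) (ζ v : ℝ), r ≤ m → m < M →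
      0 < ζ → ζ ≤ v → v ≤ T → ζ < δ₀ →
      IsLinearMap ℝ fun Ξ : Fin N → ℝ => Φt i m Ξ ζ v)
    (hΦterr : ∀ (i : Fin N) (m : ℕ) (Ξ : Fin N → ℝ) (ζ v : ℝ), r ≤ m → m < M →
      0 < ζ → ζ ≤ v → v ≤ T → ζ < δ₀ →
      |Φt i m Ξ ζ v - Φ i m Ξ ζ v| ≤ B * ‖Ξ‖ * ζ ^ q)
    (hΦtbd : ∀ (i : Fin N) (m : ℕ) (Ξ : Fin N → ℝ) (ζ v : ℝ), r ≤ m → m < M →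
      0 < ζ → ζ ≤ v → v ≤ T → ζ < δ₀ →
      |Φt i m Ξ ζ v| ≤ ‖Ξ‖ * Φ i m (fun _ => 1) ζ v)
    (Ξ : Fin N → ℝ) (δ : ℝ) (hδpos : 0 < δ) (hδ : δ < δ₀) (i : Fin N) :
    |PsiStep M r Φ Φt i Ξ (T - δ) T - Psi Φ i Ξ (T - δ) T|
      ≤ (1 + B) * ‖Ξ‖ * δ ^ (min ((r : ℝ) + q) (M : ℝ)) := by
  have hTd : T - (T - δ) = δ := by ring
  simp only [PsiStep, Psi, hTd]
  have h0δ : (0:ℝ) ≤ δ := hδpos.le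
  have hδT : δ ≤ T := hδ.le.trans ((le_min_iff.mp hδ₀le).1)
  have hδ1 : δ ≤ 1 := hδ.le.trans ((le_min_iff.mp hδ₀le).2)
  have hTT : T ≤ T := le_refl T
  set w : ℕ → ℝ := fun m => Real.exp (-δ) * δ ^ m / (Nat.factorial m : ℝ) with hw
  have hwnn : ∀ m, 0 ≤ w m := fun m => by
    simp only [hw]; positivity
  set f : ℕ → ℝ := fun m => w m * Φ i m Ξ δ T with hfdef
  set g : ℕ → ℝ := fun m => w m * Φt i m Ξ δ T with hgdef
  have hΦ1 : ∀ m, |Φ i m Ξ δ T| ≤ ‖Ξ‖ := by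
    intro m
    refine (hΦbd i m Ξ δ T h0δ hδT hTT).trans ?_
    have h1 := hΦone i m δ T h0δ hδT hTT
    nlinarith [norm_nonneg Ξ, h1.1, h1.2]
  have hfnorm : ∀ m, ‖f m‖ ≤ w m * ‖Ξ‖ := by
    intro m
    rw [hfdef]
    simp only [Real.norm_eq_abs, abs_mul, abs_of_nonneg (hwnn m)]
    exact mul_le_mul_of_nonneg_left (hΦ1 m) (hwnn m)
  have hwS : Summable w := w_summable' δ _
  have hwΞ : Summable (fun m => w m * ‖Ξ‖) := hwS.mul_right _
  have hf : Summable f := Summable.of_norm_bounded hwΞ hfnorm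
  -- split tsum
  have hsplit : ∑' m, f m = (∑ m ∈ range M, f m) + ∑' n, f (n + M) :=
    (Summable.sum_add_tsum_nat_add M hf).symm
  have hrange : ∑ m ∈ range M, f m = (∑ m ∈ range r, f m) + ∑ m ∈ Ico r M, f m :=
    (Finset.sum_range_add_sum_Ico f hrM).symm
  have hkey : ((∑ m ∈ range r, f m) + ∑ m ∈ Ico r M, g m) - ∑' m, f m
      = (∑ m ∈ Ico r M, (g m - f m)) - ∑' n, f (n + M) := by
    rw [hsplit, hrange, Finset.sum_sub_distrib]; ring
  rw [hkey]
  -- middle-sum bound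
  have hwsum : ∑ m ∈ Ico r M, w m ≤ δ ^ r := by
    have he : ∑ m ∈ Ico r M, w m = ∑ n ∈ range (M - r), w (n + r) := by
      rw [Finset.sum_Ico_eq_sum_range]
      exact Finset.sum_congr rfl fun n _ => by rw [add_comm]
    rw [he]
    have hS : Summable (fun n : ℕ => w (n + r)) :=
      hwS.comp_injective (add_left_injective r)
    refine (Summable.sum_le_tsum (range (M - r)) (fun n _ => hwnn _) hS).trans ?_
    exact exp_tail_le' δ h0δ r
  have hmid : |∑ m ∈ Ico r M, (g m - f m)| ≤ δ ^ r * (B * ‖Ξ‖ * δ ^ q) := by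
    refine (Finset.abs_sum_le_sum_abs _ _).trans ?_
    calc ∑ m ∈ Ico r M, |g m - f m|
        ≤ ∑ m ∈ Ico r M, w m * (B * ‖Ξ‖ * δ ^ q) := by
          refine Finset.sum_le_sum fun m hm => ?_
          rw [Finset.mem_Ico] at hm
          have : g m - f m = w m * (Φt i m Ξ δ T - Φ i m Ξ δ T) := by
            simp only [hfdef, hgdef]; ring
          rw [this, abs_mul, abs_of_nonneg (hwnn m)]
          exact mul_le_mul_of_nonneg_left
            (hΦterr i m Ξ δ T hm.1 hm.2 hδpos hδT hTT hδ) (hwnn m)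
      _ = (∑ m ∈ Ico r M, w m) * (B * ‖Ξ‖ * δ ^ q) := by rw [Finset.sum_mul]
      _ ≤ δ ^ r * (B * ‖Ξ‖ * δ ^ q) := by
          apply mul_le_mul_of_nonneg_right hwsum
          positivity
  -- tail bound
  have htailS : Summable (fun n : ℕ => f (n + M)) :=
    hf.comp_injective (add_left_injective M)
  have htail : |∑' n, f (n + M)| ≤ ‖Ξ‖ * δ ^ M := by
    have hnormS : Summable (fun n : ℕ => ‖f (n + M)‖) :=
      htailS.abs
    rw [← Real.norm_eq_abs]
    refine (norm_tsum_le_tsum_norm hnormS).trans ?_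
    have hb : ∀ n : ℕ, |f (n + M)| ≤ w (n + M) * ‖Ξ‖ := fun n => hfnorm (n + M)
    have hbS : Summable (fun n : ℕ => w (n + M) * ‖Ξ‖) :=
      (hwS.comp_injective (add_left_injective M)).mul_right _
    refine (Summable.tsum_le_tsum hb hnormS hbS).trans ?_
    rw [tsum_mul_right]
    have := exp_tail_le' δ h0δ M
    calc (∑' n : ℕ, w (n + M)) * ‖Ξ‖ ≤ δ ^ M * ‖Ξ‖ :=
          mul_le_mul_of_nonneg_right this (norm_nonneg Ξ)
      _ = ‖Ξ‖ * δ ^ M := mul_comm _ _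
  -- combine
  have habs : |(∑ m ∈ Ico r M, (g m - f m)) - ∑' n, f (n + M)|
      ≤ δ ^ r * (B * ‖Ξ‖ * δ ^ q) + ‖Ξ‖ * δ ^ M :=
    (abs_sub _ _).trans (add_le_add hmid htail)
  refine habs.trans ?_
  -- exponent arithmetic
  set μ := min ((r : ℝ) + q) (M : ℝ) with hμ
  have h1 : δ ^ r * δ ^ q = δ ^ ((r : ℝ) + q) := by
    rw [Real.rpow_add hδpos, Real.rpow_natCast]
  have h2 : (δ : ℝ) ^ M = δ ^ ((M : ℝ)) := (Real.rpow_natCast δ M).symm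
  have hle1 : δ ^ ((r : ℝ) + q) ≤ δ ^ μ :=
    Real.rpow_le_rpow_of_exponent_ge hδpos hδ1 (min_le_left _ _)
  have hle2 : δ ^ ((M : ℝ)) ≤ δ ^ μ :=
    Real.rpow_le_rpow_of_exponent_ge hδpos hδ1 (min_le_right _ _)
  have hΞ : (0:ℝ) ≤ ‖Ξ‖ := norm_nonneg Ξ
  calc δ ^ r * (B * ‖Ξ‖ * δ ^ q) + ‖Ξ‖ * δ ^ M
      = B * ‖Ξ‖ * (δ ^ r * δ ^ q) + ‖Ξ‖ * δ ^ ((M:ℝ)) := by rw [← h2]; ring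
    _ = B * ‖Ξ‖ * δ ^ ((r:ℝ) + q) + ‖Ξ‖ * δ ^ ((M:ℝ)) := by rw [h1]
    _ ≤ B * ‖Ξ‖ * δ ^ μ + ‖Ξ‖ * δ ^ μ := by
        gcongr 
    _ = (1 + B) * ‖Ξ‖ * δ ^ μ := by ring
end

section
/- Under the abstract pricing framework, the approximation scheme, and the backward algorithm defined in the context, the algorithm iterates are uniformly stable: for every payoff Ξ, every positive integer k with δ := T/k < δ₀, every n ∈ {0,1,…,k−1} and every i ∈ {1,…,N}, |Ψ̃^{(M,r,k)}_i[Ξ](nδ;T)| ≤ ‖Ξ‖∞. -/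
open MeasureTheory Finset

/-- **Uniform stability of the algorithm iterates.** Under the abstract pricing framework,
the approximation scheme and the backward algorithm, for every payoff `Ξ`, every positive
integer `k` with `δ := T/k < δ₀`, every `n ∈ {0,…,k−1}` and every regime `i`,
`|Ψ̃^{(M,r,k)}_i[Ξ](nδ;T)| ≤ ‖Ξ‖∞`. -/
theorem poisson_algorithm_stability
    {N : ℕ} (hN : 0 < N) (T : ℝ) (hT : 0 < T)
    (Φ Φt : Fin N → ℕ → (Fin N → ℝ) → ℝ → ℝ → ℝ)
    (hΦlin : ∀ (i : Fin N) (m : ℕ) (ζ v : ℝ), 0 ≤ ζ → ζ ≤ v → v ≤ T →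
      IsLinearMap ℝ fun Ξ : Fin N → ℝ => Φ i m Ξ ζ v)
    (hΦone : ∀ (i : Fin N) (m : ℕ) (ζ v : ℝ), 0 ≤ ζ → ζ ≤ v → v ≤ T →
      Φ i m (fun _ => 1) ζ v ∈ Set.Icc (0 : ℝ) 1)
    (hΦbd : ∀ (i : Fin N) (m : ℕ) (Ξ : Fin N → ℝ) (ζ v : ℝ), 0 ≤ ζ → ζ ≤ v → v ≤ T →
      |Φ i m Ξ ζ v| ≤ ‖Ξ‖ * Φ i m (fun _ => 1) ζ v)
    (M r : ℕ) (hM : 1 ≤ M) (hr : 1 ≤ r) (hrM : r ≤ M)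
    (q : ℝ) (hq : 1 ≤ q) (B : ℝ) (hB : 0 ≤ B)
    (δ₀ : ℝ) (hδ₀pos : 0 < δ₀) (hδ₀le : δ₀ ≤ min T 1)
    (hΦtlin : ∀ (i : Fin N) (m : ℕ) (ζ v : ℝ), r ≤ m → m < M →
      0 < ζ → ζ ≤ v → v ≤ T → ζ < δ₀ →
      IsLinearMap ℝ fun Ξ : Fin N → ℝ => Φt i m Ξ ζ v)
    (hΦterr : ∀ (i : Fin N) (m : ℕ) (Ξ : Fin N → ℝ) (ζ v : ℝ), r ≤ m → m < M →
      0 < ζ → ζ ≤ v → v ≤ T → ζ < δ₀ →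
      |Φt i m Ξ ζ v - Φ i m Ξ ζ v| ≤ B * ‖Ξ‖ * ζ ^ q)
    (hΦtbd : ∀ (i : Fin N) (m : ℕ) (Ξ : Fin N → ℝ) (ζ v : ℝ), r ≤ m → m < M →
      0 < ζ → ζ ≤ v → v ≤ T → ζ < δ₀ →
      |Φt i m Ξ ζ v| ≤ ‖Ξ‖ * Φ i m (fun _ => 1) ζ v)
    (Ξ : Fin N → ℝ) (k : ℕ) (hk : 0 < k) (hδ : T / k < δ₀)
    (n : ℕ) (hn : n ≤ k - 1) (i : Fin N) :
    |PsiIter M r k T Φ Φt Ξ (k - 1 - n) i| ≤ ‖Ξ‖ := by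
  have hk0 : (k:ℝ) ≠ 0 := Nat.cast_ne_zero.mpr hk.ne'
  have hkpos : (0:ℝ) < k := Nat.cast_pos.mpr hk
  have hδpos : 0 < T / k := div_pos hT hkpos
  -- one-step stability
  have hstep : ∀ (Ξ' : Fin N → ℝ) (C : ℝ), 0 ≤ C → ‖Ξ'‖ ≤ C →
      ∀ (i' : Fin N) (t v : ℝ), v - t = T / k → T / k ≤ v → v ≤ T →
      |PsiStep M r Φ Φt i' Ξ' t v| ≤ C := by
    intro Ξ' C hC0 hC i' t v hζ hζv hvT
    have hζpos : 0 < v - t := hζ ▸ hδpos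
    have hζδ : v - t < δ₀ := hζ ▸ hδ
    have hζle : v - t ≤ v := by
      have : 0 ≤ t := by nlinarith [hζ ▸ hζv]
      linarith
    set w : ℕ → ℝ := fun m => Real.exp (-(v - t)) * (v - t) ^ m / (Nat.factorial m : ℝ)
      with hwdef
    have hw : ∀ m, 0 ≤ w m := by
      intro m
      have := Real.exp_pos (-(v - t))
      have := pow_nonneg hζpos.le m
      positivity
    have hΞ'Φ : ∀ m, ‖Ξ'‖ * Φ i' m (fun _ => 1) (v - t) v ≤ C * Φ i' m (fun _ => 1) (v - t) v := by
      intro m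
      exact mul_le_mul_of_nonneg_right hC (hΦone i' m _ v hζpos.le hζle hvT).1
    calc |PsiStep M r Φ Φt i' Ξ' t v|
        ≤ (∑ m ∈ Finset.range r, w m * (C * Φ i' m (fun _ => 1) (v - t) v))
          + ∑ m ∈ Finset.Ico r M, w m * (C * Φ i' m (fun _ => 1) (v - t) v) := by
          refine (abs_add_le _ _).trans (add_le_add ?_ ?_) <;>
            refine (Finset.abs_sum_le_sum_abs _ _).trans (Finset.sum_le_sum ?_)
          · intro m _
            rw [abs_mul, abs_of_nonneg (hw m)]
            exact mul_le_mul_of_nonneg_left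
              (((hΦbd i' m Ξ' _ v hζpos.le hζle hvT).trans (hΞ'Φ m))) (hw m)
          · intro m hm
            rw [Finset.mem_Ico] at hm
            rw [abs_mul, abs_of_nonneg (hw m)]
            exact mul_le_mul_of_nonneg_left
              (((hΦtbd i' m Ξ' _ v hm.1 hm.2 hζpos hζle hvT hζδ).trans (hΞ'Φ m))) (hw m)
      _ = ∑ m ∈ Finset.range M, w m * (C * Φ i' m (fun _ => 1) (v - t) v) :=
          Finset.sum_range_add_sum_Ico _ hrM
      _ ≤ ∑ m ∈ Finset.range M, w m * C := by
          refine Finset.sum_le_sum fun m _ => ?_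
          refine mul_le_mul_of_nonneg_left ?_ (hw m)
          have h1 := (hΦone i' m _ v hζpos.le hζle hvT).2
          nlinarith
      _ = C * ∑ m ∈ Finset.range M, w m := by rw [← Finset.sum_mul, mul_comm]
      _ ≤ C * 1 := by
          refine mul_le_mul_of_nonneg_left ?_ hC0
          have hsum : ∑ m ∈ Finset.range M, w m
              = Real.exp (-(v - t)) * ∑ m ∈ Finset.range M, (v - t) ^ m / (Nat.factorial m : ℝ) := by
            rw [Finset.mul_sum]
            exact Finset.sum_congr rfl fun m _ => (mul_div_assoc _ _ _)
          rw [hsum]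
          have hle := Real.sum_le_exp_of_nonneg hζpos.le M
          calc Real.exp (-(v - t)) * ∑ m ∈ Finset.range M, (v - t) ^ m / (Nat.factorial m : ℝ)
              ≤ Real.exp (-(v - t)) * Real.exp (v - t) :=
                mul_le_mul_of_nonneg_left hle (Real.exp_pos _).le
            _ = 1 := by rw [← Real.exp_add]; simp
      _ = C := mul_one C
  -- main induction
  have key : ∀ j, j ≤ k - 1 → ∀ i' : Fin N, |PsiIter M r k T Φ Φt Ξ j i'| ≤ ‖Ξ‖ := by
    intro j
    induction j with
    | zero =>
      intro _ i'
      show |PsiStep M r Φ Φt i' Ξ (((k - 1 : ℕ) : ℝ) * (T / k)) T| ≤ ‖Ξ‖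
      have hcast : ((k - 1 : ℕ) : ℝ) = (k : ℝ) - 1 := by
        rw [Nat.cast_sub hk]; norm_num
      refine hstep Ξ ‖Ξ‖ (norm_nonneg _) le_rfl i' _ T ?_ ?_ le_rfl
      · rw [hcast]; field_simp; ring
      · exact div_le_self hT.le (by exact_mod_cast hk)
    | succ j ih =>
      intro hj i'
      have hj' : j ≤ k - 1 := Nat.le_of_succ_le hj
      have hb : k - 1 - j = (k - 1 - (j + 1)) + 1 := by omega
      show |PsiStep M r Φ Φt i' (PsiIter M r k T Φ Φt Ξ j)
        (((k - 1 - (j + 1) : ℕ) : ℝ) * (T / k)) (((k - 1 - j : ℕ) : ℝ) * (T / k))| ≤ ‖Ξ‖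
      have hnorm : ‖PsiIter M r k T Φ Φt Ξ j‖ ≤ ‖Ξ‖ := by
        rw [pi_norm_le_iff_of_nonneg (norm_nonneg _)]
        intro ℓ
        simpa [Real.norm_eq_abs] using ih hj' ℓ
      refine hstep _ ‖Ξ‖ (norm_nonneg _) hnorm i' _ _ ?_ ?_ ?_
      · rw [hb]; push_cast; ring
      · rw [hb]; push_cast
        have : (0:ℝ) ≤ ((k - 1 - (j + 1) : ℕ) : ℝ) := Nat.cast_nonneg _
        nlinarith
      · have hle : ((k - 1 - j : ℕ) : ℝ) ≤ (k : ℝ) := by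
          exact_mod_cast Nat.cast_le.mpr (by omega : k - 1 - j ≤ k)
        calc ((k - 1 - j : ℕ) : ℝ) * (T / k) ≤ (k : ℝ) * (T / k) :=
              mul_le_mul_of_nonneg_right hle hδpos.le
          _ = T := by field_simp
  exact key (k - 1 - n) (Nat.sub_le _ _) i
end

section
/- Under the abstract pricing framework and the backward algorithm defined in the context, with the approximation bounds |Φ̃_{i,m}[Ξ](ζ;v) − Φ_{i,m}[Ξ](ζ;v)| ≤ B‖Ξ‖∞·ζ^q and |Φ̃_{i,m}[Ξ](ζ;v)| ≤ C‖Ξ‖∞, the algorithm iterates satisfy, for every positive integer k with δ := T/k < δ₀, every n ∈ {0,…,k−1} and every i, |Ψ̃^{(M,r,k)}_i[Ξ](nδ;T)| ≤ ‖Ξ‖∞·(1 + C·δ^r)^k ≤ ‖Ξ‖∞·exp(C·T^r); in particular the iterates are bounded uniformly in k by a constant multiple of ‖Ξ‖∞ depending only on C, T and r. -/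
open MeasureTheory Finset

/-- One-step stability bound. -/
lemma psiStep_bound {N : ℕ} (T : ℝ)
    (Φ Φt : Fin N → ℕ → (Fin N → ℝ) → ℝ → ℝ → ℝ)
    (hΦone : ∀ (i : Fin N) (m : ℕ) (ζ v : ℝ), 0 ≤ ζ → ζ ≤ v → v ≤ T →
      Φ i m (fun _ => 1) ζ v ∈ Set.Icc (0 : ℝ) 1)
    (hΦbd : ∀ (i : Fin N) (m : ℕ) (Ξ : Fin N → ℝ) (ζ v : ℝ), 0 ≤ ζ → ζ ≤ v → v ≤ T →
      |Φ i m Ξ ζ v| ≤ ‖Ξ‖ * Φ i m (fun _ => 1) ζ v)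
    (M r : ℕ) (C : ℝ) (hC : 0 ≤ C) (δ₀ : ℝ)
    (hΦtbd : ∀ (i : Fin N) (m : ℕ) (Ξ : Fin N → ℝ) (ζ v : ℝ), r ≤ m → m < M →
      0 < ζ → ζ ≤ v → v ≤ T → ζ < δ₀ →
      |Φt i m Ξ ζ v| ≤ C * ‖Ξ‖)
    (i : Fin N) (Ξ : Fin N → ℝ) (t v : ℝ)
    (hζ : 0 < v - t) (hv : v - t ≤ v) (hvT : v ≤ T) (hζδ : v - t < δ₀) :
    |PsiStep M r Φ Φt i Ξ t v| ≤ ‖Ξ‖ * (1 + C * (v - t) ^ r) := by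
  set ζ := v - t with hζdef
  have hζ0 : (0:ℝ) ≤ ζ := hζ.le
  have hexp : (0:ℝ) < Real.exp (-ζ) := Real.exp_pos _
  have hc : ∀ m : ℕ, 0 ≤ Real.exp (-ζ) * ζ ^ m / (Nat.factorial m : ℝ) := fun m => by
    positivity
  -- bound on the first sum
  have h1 : |∑ m ∈ range r, Real.exp (-ζ) * ζ ^ m / (Nat.factorial m : ℝ) * Φ i m Ξ ζ v|
      ≤ ‖Ξ‖ * 1 := by
    calc |∑ m ∈ range r, Real.exp (-ζ) * ζ ^ m / (Nat.factorial m : ℝ) * Φ i m Ξ ζ v|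
        ≤ ∑ m ∈ range r, |Real.exp (-ζ) * ζ ^ m / (Nat.factorial m : ℝ) * Φ i m Ξ ζ v| :=
          Finset.abs_sum_le_sum_abs _ _
      _ ≤ ∑ m ∈ range r, Real.exp (-ζ) * ζ ^ m / (Nat.factorial m : ℝ) * ‖Ξ‖ := by
          refine Finset.sum_le_sum fun m _ => ?_
          rw [abs_mul, abs_of_nonneg (hc m)]
          refine mul_le_mul_of_nonneg_left ?_ (hc m)
          refine le_trans (hΦbd i m Ξ ζ v hζ0 hv hvT) ?_
          have h1' := (hΦone i m ζ v hζ0 hv hvT).2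
          calc ‖Ξ‖ * Φ i m (fun _ => 1) ζ v ≤ ‖Ξ‖ * 1 :=
                mul_le_mul_of_nonneg_left h1' (norm_nonneg _)
            _ = ‖Ξ‖ := mul_one _
      _ = (∑ m ∈ range r, Real.exp (-ζ) * ζ ^ m / (Nat.factorial m : ℝ)) * ‖Ξ‖ := by
          rw [Finset.sum_mul]
      _ ≤ 1 * ‖Ξ‖ := by
          refine mul_le_mul_of_nonneg_right ?_ (norm_nonneg _)
          have : ∑ m ∈ range r, Real.exp (-ζ) * ζ ^ m / (Nat.factorial m : ℝ)
              = Real.exp (-ζ) * ∑ m ∈ range r, ζ ^ m / (Nat.factorial m : ℝ) := by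
            rw [Finset.mul_sum]; exact Finset.sum_congr rfl fun m _ => by ring
          rw [this]
          calc Real.exp (-ζ) * ∑ m ∈ range r, ζ ^ m / (Nat.factorial m : ℝ)
              ≤ Real.exp (-ζ) * Real.exp ζ :=
                mul_le_mul_of_nonneg_left (Real.sum_le_exp_of_nonneg hζ0 r) hexp.le
            _ = 1 := by rw [← Real.exp_add]; simp
      _ = ‖Ξ‖ * 1 := by ring
  -- bound on the tail coefficient sum
  have hkey : ∑ m ∈ Finset.Ico r M, Real.exp (-ζ) * ζ ^ m / (Nat.factorial m : ℝ) ≤ ζ ^ r := by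
    calc ∑ m ∈ Finset.Ico r M, Real.exp (-ζ) * ζ ^ m / (Nat.factorial m : ℝ)
        ≤ ∑ m ∈ Finset.Ico r M,
            Real.exp (-ζ) * ζ ^ r * (ζ ^ (m - r) / (Nat.factorial (m - r) : ℝ)) := by
          refine Finset.sum_le_sum fun m hm => ?_
          have hrm : r ≤ m := (Finset.mem_Ico.mp hm).1
          have hpow : ζ ^ m = ζ ^ r * ζ ^ (m - r) := by
            rw [← pow_add, Nat.add_sub_cancel' hrm]
          have hfac : (Nat.factorial (m - r) : ℝ) ≤ (Nat.factorial m : ℝ) := by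
            exact_mod_cast Nat.factorial_le (Nat.sub_le m r)
          have hfac0 : (0:ℝ) < (Nat.factorial (m - r) : ℝ) := by
            exact_mod_cast Nat.factorial_pos _
          rw [hpow]
          have : Real.exp (-ζ) * (ζ ^ r * ζ ^ (m - r)) / (Nat.factorial m : ℝ)
              ≤ Real.exp (-ζ) * (ζ ^ r * ζ ^ (m - r)) / (Nat.factorial (m - r) : ℝ) := by
            apply div_le_div_of_nonneg_left _ hfac0 hfac
            positivity
          calc Real.exp (-ζ) * (ζ ^ r * ζ ^ (m - r)) / (Nat.factorial m : ℝ)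
              ≤ Real.exp (-ζ) * (ζ ^ r * ζ ^ (m - r)) / (Nat.factorial (m - r) : ℝ) := this
            _ = Real.exp (-ζ) * ζ ^ r * (ζ ^ (m - r) / (Nat.factorial (m - r) : ℝ)) := by ring
      _ = Real.exp (-ζ) * ζ ^ r *
            ∑ j ∈ range (M - r), ζ ^ j / (Nat.factorial j : ℝ) := by
          rw [← Finset.mul_sum, Finset.sum_Ico_eq_sum_range]
          congr 1
          exact Finset.sum_congr rfl fun j _ => by rw [Nat.add_sub_cancel_left]
      _ ≤ Real.exp (-ζ) * ζ ^ r * Real.exp ζ := by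
          refine mul_le_mul_of_nonneg_left (Real.sum_le_exp_of_nonneg hζ0 _) ?_
          positivity
      _ = ζ ^ r := by rw [mul_comm, ← mul_assoc, ← Real.exp_add]; simp
  have h2 : |∑ m ∈ Finset.Ico r M, Real.exp (-ζ) * ζ ^ m / (Nat.factorial m : ℝ) * Φt i m Ξ ζ v|
      ≤ ‖Ξ‖ * (C * ζ ^ r) := by
    calc |∑ m ∈ Finset.Ico r M, Real.exp (-ζ) * ζ ^ m / (Nat.factorial m : ℝ) * Φt i m Ξ ζ v|
        ≤ ∑ m ∈ Finset.Ico r M,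
            |Real.exp (-ζ) * ζ ^ m / (Nat.factorial m : ℝ) * Φt i m Ξ ζ v| :=
          Finset.abs_sum_le_sum_abs _ _
      _ ≤ ∑ m ∈ Finset.Ico r M,
            Real.exp (-ζ) * ζ ^ m / (Nat.factorial m : ℝ) * (C * ‖Ξ‖) := by
          refine Finset.sum_le_sum fun m hm => ?_
          rw [abs_mul, abs_of_nonneg (hc m)]
          refine mul_le_mul_of_nonneg_left ?_ (hc m)
          exact hΦtbd i m Ξ ζ v (Finset.mem_Ico.mp hm).1 (Finset.mem_Ico.mp hm).2 hζ hv hvT hζδ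
      _ = (∑ m ∈ Finset.Ico r M, Real.exp (-ζ) * ζ ^ m / (Nat.factorial m : ℝ)) * (C * ‖Ξ‖) := by
          rw [Finset.sum_mul]
      _ ≤ ζ ^ r * (C * ‖Ξ‖) := by
          refine mul_le_mul_of_nonneg_right hkey (by positivity)
      _ = ‖Ξ‖ * (C * ζ ^ r) := by ring
  calc |PsiStep M r Φ Φt i Ξ t v| ≤ _ + _ := abs_add_le _ _
    _ ≤ ‖Ξ‖ * 1 + ‖Ξ‖ * (C * ζ ^ r) := add_le_add h1 h2
    _ = ‖Ξ‖ * (1 + C * ζ ^ r) := by ring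

/-- **Stability of the algorithm iterates under the milder condition.** With the
approximation bounds `|Φ̃_{i,m}[Ξ] − Φ_{i,m}[Ξ]| ≤ B‖Ξ‖∞ ζ^q` and `|Φ̃_{i,m}[Ξ]| ≤ C‖Ξ‖∞`,
the backward algorithm iterates satisfy, for every `k` with `δ := T/k < δ₀`, every
`n ∈ {0,…,k−1}` and every `i`, `|Ψ̃^{(M,r,k)}_i[Ξ](nδ;T)| ≤ ‖Ξ‖∞ (1 + C δ^r)^k`, and
moreover `‖Ξ‖∞ (1 + C δ^r)^k ≤ ‖Ξ‖∞ exp(C T^r)`, a bound uniform in `k`. -/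
theorem poisson_algorithm_stability_milder
    {N : ℕ} (hN : 0 < N) (T : ℝ) (hT : 0 < T)
    (Φ Φt : Fin N → ℕ → (Fin N → ℝ) → ℝ → ℝ → ℝ)
    (hΦlin : ∀ (i : Fin N) (m : ℕ) (ζ v : ℝ), 0 ≤ ζ → ζ ≤ v → v ≤ T →
      IsLinearMap ℝ fun Ξ : Fin N → ℝ => Φ i m Ξ ζ v)
    (hΦone : ∀ (i : Fin N) (m : ℕ) (ζ v : ℝ), 0 ≤ ζ → ζ ≤ v → v ≤ T →
      Φ i m (fun _ => 1) ζ v ∈ Set.Icc (0 : ℝ) 1)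
    (hΦbd : ∀ (i : Fin N) (m : ℕ) (Ξ : Fin N → ℝ) (ζ v : ℝ), 0 ≤ ζ → ζ ≤ v → v ≤ T →
      |Φ i m Ξ ζ v| ≤ ‖Ξ‖ * Φ i m (fun _ => 1) ζ v)
    (M r : ℕ) (hM : 1 ≤ M) (hr : 1 ≤ r) (hrM : r ≤ M)
    (q : ℝ) (hq : 1 ≤ q) (B C : ℝ) (hB : 0 ≤ B) (hC : 0 ≤ C)
    (δ₀ : ℝ) (hδ₀pos : 0 < δ₀) (hδ₀le : δ₀ ≤ min T 1)
    (hΦtlin : ∀ (i : Fin N) (m : ℕ) (ζ v : ℝ), r ≤ m → m < M →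
      0 < ζ → ζ ≤ v → v ≤ T → ζ < δ₀ →
      IsLinearMap ℝ fun Ξ : Fin N → ℝ => Φt i m Ξ ζ v)
    (hΦterr : ∀ (i : Fin N) (m : ℕ) (Ξ : Fin N → ℝ) (ζ v : ℝ), r ≤ m → m < M →
      0 < ζ → ζ ≤ v → v ≤ T → ζ < δ₀ →
      |Φt i m Ξ ζ v - Φ i m Ξ ζ v| ≤ B * ‖Ξ‖ * ζ ^ q)
    (hΦtbd : ∀ (i : Fin N) (m : ℕ) (Ξ : Fin N → ℝ) (ζ v : ℝ), r ≤ m → m < M →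
      0 < ζ → ζ ≤ v → v ≤ T → ζ < δ₀ →
      |Φt i m Ξ ζ v| ≤ C * ‖Ξ‖)
    (Ξ : Fin N → ℝ) (k : ℕ) (hk : 0 < k) (hδ : T / k < δ₀) :
    (∀ n : ℕ, n ≤ k - 1 → ∀ i : Fin N,
      |PsiIter M r k T Φ Φt Ξ (k - 1 - n) i| ≤ ‖Ξ‖ * (1 + C * (T / k) ^ r) ^ k)
    ∧ ‖Ξ‖ * (1 + C * (T / k) ^ r) ^ k ≤ ‖Ξ‖ * Real.exp (C * T ^ r) := by
  have hk0 : (0:ℝ) < (k:ℝ) := by exact_mod_cast hk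
  set δ : ℝ := T / k with hδdef
  have hδpos : 0 < δ := div_pos hT hk0
  have hδT : (k:ℝ) * δ = T := by rw [hδdef]; field_simp
  have hδleT : δ ≤ T := by
    refine div_le_self hT.le ?_
    exact_mod_cast hk
  have hbase0 : (0:ℝ) ≤ 1 + C * δ ^ r := by positivity
  have hbase1 : (1:ℝ) ≤ 1 + C * δ ^ r := by nlinarith [pow_nonneg hδpos.le r]
  -- the key induction
  have main : ∀ j : ℕ, j ≤ k - 1 → ∀ i : Fin N,
      |PsiIter M r k T Φ Φt Ξ j i| ≤ ‖Ξ‖ * (1 + C * δ ^ r) ^ (j + 1) := by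
    intro j
    induction j with
    | zero =>
      intro _ i
      have hkm1 : ((k - 1 : ℕ) : ℝ) = (k:ℝ) - 1 := by
        have : 1 ≤ k := hk
        push_cast [Nat.cast_sub this]
        ring
      have hvt : T - ((k - 1 : ℕ) : ℝ) * δ = δ := by
        rw [hkm1, ← hδT]; ring
      have := psiStep_bound T Φ Φt hΦone hΦbd M r C hC δ₀ hΦtbd i Ξ
        (((k - 1 : ℕ) : ℝ) * δ) T (by rw [hvt]; exact hδpos)
        (by rw [hvt]; exact hδleT) le_rfl (by rw [hvt]; exact hδ)
      rw [hvt] at this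
      simpa [PsiIter, pow_one] using this
    | succ j ih =>
      intro hj i
      have hj' : j ≤ k - 1 := by omega
      have ha : 1 ≤ k - 1 - j := by omega
      have hsub : k - 1 - (j + 1) = (k - 1 - j) - 1 := by omega
      have hcast : ((k - 1 - j : ℕ) : ℝ) ≥ 1 := by exact_mod_cast ha
      have hvt : ((k - 1 - j : ℕ) : ℝ) * δ - ((k - 1 - (j + 1) : ℕ) : ℝ) * δ = δ := by
        rw [hsub, Nat.cast_sub ha]
        push_cast
        ring
      have hvleT : ((k - 1 - j : ℕ) : ℝ) * δ ≤ T := by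
        rw [← hδT]
        have : ((k - 1 - j : ℕ) : ℝ) ≤ (k:ℝ) := by exact_mod_cast Nat.le_of_lt_succ (by omega)
        nlinarith
      have hζv : δ ≤ ((k - 1 - j : ℕ) : ℝ) * δ := by nlinarith
      -- norm of previous iterate
      have hprev : ‖PsiIter M r k T Φ Φt Ξ j‖ ≤ ‖Ξ‖ * (1 + C * δ ^ r) ^ (j + 1) := by
        refine pi_norm_le_iff_of_nonneg (by positivity) |>.mpr fun i' => ?_
        simpa [Real.norm_eq_abs] using ih hj' i'
      have hstep := psiStep_bound T Φ Φt hΦone hΦbd M r C hC δ₀ hΦtbd i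
        (PsiIter M r k T Φ Φt Ξ j)
        (((k - 1 - (j + 1) : ℕ) : ℝ) * δ) (((k - 1 - j : ℕ) : ℝ) * δ)
        (by rw [hvt]; exact hδpos) (by rw [hvt]; exact hζv) hvleT (by rw [hvt]; exact hδ)
      rw [hvt] at hstep
      have : |PsiIter M r k T Φ Φt Ξ (j + 1) i| ≤
          ‖PsiIter M r k T Φ Φt Ξ j‖ * (1 + C * δ ^ r) := by
        simpa [PsiIter] using hstep
      calc |PsiIter M r k T Φ Φt Ξ (j + 1) i|
          ≤ ‖PsiIter M r k T Φ Φt Ξ j‖ * (1 + C * δ ^ r) := this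
        _ ≤ (‖Ξ‖ * (1 + C * δ ^ r) ^ (j + 1)) * (1 + C * δ ^ r) :=
            mul_le_mul_of_nonneg_right hprev hbase0
        _ = ‖Ξ‖ * (1 + C * δ ^ r) ^ (j + 1 + 1) := by ring
  constructor
  · intro n hn i
    have hj : k - 1 - n ≤ k - 1 := by omega
    refine le_trans (main _ hj i) ?_
    refine mul_le_mul_of_nonneg_left ?_ (norm_nonneg _)
    exact pow_le_pow_right₀ hbase1 (by omega)
  · refine mul_le_mul_of_nonneg_left ?_ (norm_nonneg _)
    have h1 : (1 + C * δ ^ r) ^ k ≤ Real.exp (C * δ ^ r) ^ k := by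
      refine pow_le_pow_left₀ hbase0 ?_ k
      have := Real.add_one_le_exp (C * δ ^ r)
      linarith
    have h2 : Real.exp (C * δ ^ r) ^ k = Real.exp ((k:ℝ) * (C * δ ^ r)) := by
      rw [← Real.exp_nat_mul]
    have h3 : (k:ℝ) * (C * δ ^ r) ≤ C * T ^ r := by
      have hδr : δ ^ r ≤ δ * T ^ (r - 1) := by
        have : δ ^ r = δ ^ 1 * δ ^ (r - 1) := by
          rw [← pow_add]
          congr 1
          omega
        rw [this, pow_one]
        exact mul_le_mul_of_nonneg_left (pow_le_pow_left₀ hδpos.le hδleT _) hδpos.le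
      have hTr : (k:ℝ) * (δ * T ^ (r - 1)) = T ^ r := by
        rw [← mul_assoc, hδT, ← pow_succ']
        congr 1
        omega
      calc (k:ℝ) * (C * δ ^ r) = C * ((k:ℝ) * δ ^ r) := by ring
        _ ≤ C * ((k:ℝ) * (δ * T ^ (r - 1))) := by
            refine mul_le_mul_of_nonneg_left ?_ hC
            exact mul_le_mul_of_nonneg_left hδr hk0.le
        _ = C * T ^ r := by rw [hTr]
    calc (1 + C * δ ^ r) ^ k ≤ Real.exp ((k:ℝ) * (C * δ ^ r)) := h2 ▸ h1
      _ ≤ Real.exp (C * T ^ r) := Real.exp_le_exp.mpr h3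
end

section
/- For every m ≥ 1, every integer p ≥ 0 and every x ∈ ℝ^m, the difference between L_m and its degree-p Taylor approximation satisfies |L_m(x) − L̂_m^{(p)}(x)| ≤ Σ_{i=p+1}^∞ m^{i/2}·‖x‖^i·m!/(m+i)!, where the series on the right converges. -/
open MeasureTheory Finset

/-- The standard corner simplex `T_m = {λ ∈ ℝ^m : λ_i ≥ 0, Σ λ_i ≤ 1}`. -/
def cornerSimplex (m : ℕ) : Set (Fin m → ℝ) :=
  {l | (∀ j, 0 ≤ l j) ∧ ∑ j, l j ≤ 1}

/-- The Laplace transform of the symmetric Dirichlet distribution: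
`L_m(x₁,…,x_m) = m!·∫_{T_m} exp(−Σ_j x_j λ_j) dλ`. -/
noncomputable def dirichletLaplace (m : ℕ) (x : Fin m → ℝ) : ℝ :=
  (Nat.factorial m : ℝ) * ∫ l in cornerSimplex m, Real.exp (-∑ j, x j * l j)

/-- The degree-`p` Taylor polynomial of the Dirichlet Laplace transform at the origin:
`L̂_m^{(p)}(x) = m!·Σ_{ℓ=0}^{p} ∫_{T_m} (−⟨x,λ⟩)^ℓ/ℓ! dλ`. -/
noncomputable def dirichletLaplaceTaylor (m p : ℕ) (x : Fin m → ℝ) : ℝ :=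
  (Nat.factorial m : ℝ) * ∑ ℓ ∈ Finset.range (p + 1),
    ∫ l in cornerSimplex m, (-∑ j, x j * l j) ^ ℓ / (Nat.factorial ℓ : ℝ)


open Pointwise


lemma cornerSimplex_isClosed (m : ℕ) : IsClosed (cornerSimplex m) := by
  have h1 : IsClosed {l : Fin m → ℝ | ∀ j, 0 ≤ l j} := by
    have : {l : Fin m → ℝ | ∀ j, 0 ≤ l j} = ⋂ j, {l | 0 ≤ l j} := by
      ext l; simp
    rw [this]
    exact isClosed_iInter fun j => isClosed_le continuous_const (continuous_apply j)
  have h2 : IsClosed {l : Fin m → ℝ | ∑ j, l j ≤ 1} :=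
    isClosed_le (by continuity) continuous_const
  exact h1.inter h2

lemma cornerSimplex_measurableSet (m : ℕ) : MeasurableSet (cornerSimplex m) :=
  (cornerSimplex_isClosed m).measurableSet

lemma cornerSimplex_isCompact (m : ℕ) : IsCompact (cornerSimplex m) := by
  refine (isCompact_Icc (a := (0 : Fin m → ℝ)) (b := 1)).of_isClosed_subset
    (cornerSimplex_isClosed m) ?_
  rintro l ⟨h0, h1⟩
  refine Set.mem_Icc.2 ⟨fun j => h0 j, fun j => ?_⟩
  calc l j ≤ ∑ i, l i := Finset.single_le_sum (fun i _ => h0 i) (Finset.mem_univ j)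
    _ ≤ 1 := h1

lemma beta_nat : ∀ (m k : ℕ), ∫ t in (0:ℝ)..1, t ^ k * (1 - t) ^ m
    = (Nat.factorial k * Nat.factorial m : ℝ) / (Nat.factorial (k + m + 1)) := by
  intro m
  induction m with
  | zero =>
    intro k
    have h1 : k + 0 + 1 = k + 1 := by omega
    simp only [pow_zero, mul_one, integral_pow, Nat.factorial_zero, Nat.cast_one, h1,
      Nat.factorial_succ]
    push_cast
    have hk : ((k : ℝ) + 1) ≠ 0 := by positivity
    have hf : (k.factorial : ℝ) ≠ 0 := by positivity
    field_simp
    simp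
  | succ m ih =>
    intro k
    have hu : ∀ t ∈ Set.uIcc (0:ℝ) 1, HasDerivAt (fun t : ℝ => (1 - t) ^ (m + 1))
        (-((m + 1 : ℝ) * (1 - t) ^ m)) t := by
      intro t _
      have h1 : HasDerivAt (fun t : ℝ => 1 - t) (-1) t := by
        exact (hasDerivAt_id' (x := t)).const_sub 1
      have := (hasDerivAt_pow (m + 1) (1 - t)).comp t h1
      simpa [Function.comp_def, mul_comm, mul_assoc, mul_left_comm] using this
    have hv : ∀ t ∈ Set.uIcc (0:ℝ) 1, HasDerivAt (fun t : ℝ => t ^ (k + 1) / (k + 1 : ℝ))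
        (t ^ k) t := by
      intro t _
      have := (hasDerivAt_pow (k + 1) t).div_const ((k : ℝ) + 1)
      have hk : ((k : ℝ) + 1) ≠ 0 := by positivity
      have h2 : t ^ k * (((k:ℝ) + 1) / ((k:ℝ) + 1)) = t ^ k := by
        rw [div_self hk, mul_one]
      simpa [mul_comm, mul_div_assoc, h2] using this
    have hiu : IntervalIntegrable (fun t : ℝ => -((m + 1 : ℝ) * (1 - t) ^ m)) volume 0 1 :=
      (Continuous.neg (by continuity)).intervalIntegrable 0 1
    have hiv : IntervalIntegrable (fun t : ℝ => t ^ k) volume 0 1 :=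
      (continuous_pow k).intervalIntegrable 0 1
    have key := intervalIntegral.integral_mul_deriv_eq_deriv_mul hu hv hiu hiv
    have hswap : ∀ t : ℝ, (1 - t) ^ (m + 1) * t ^ k = t ^ k * (1 - t) ^ (m + 1) := by
      intro t; ring
    simp only [hswap] at key
    rw [key]
    have hre : ∀ t : ℝ, -((m + 1 : ℝ) * (1 - t) ^ m) * (t ^ (k + 1) / (k + 1 : ℝ))
        = (-((m + 1 : ℝ) / (k + 1 : ℝ))) * (t ^ (k + 1) * (1 - t) ^ m) := by
      intro t; ring
    simp only [hre]
    rw [intervalIntegral.integral_const_mul, ih (k + 1)]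
    have h1 : ((k + 1).factorial : ℝ) = (k + 1) * k.factorial := by
      rw [Nat.factorial_succ]; push_cast; ring
    have h2 : ((m + 1).factorial : ℝ) = (m + 1) * m.factorial := by
      rw [Nat.factorial_succ]; push_cast; ring
    have h3 : (k + 1) + m + 1 = k + (m + 1) + 1 := by omega
    rw [h3, h1, h2]
    have hk : ((k : ℝ) + 1) ≠ 0 := by positivity
    have hf : ((k + (m + 1) + 1).factorial : ℝ) ≠ 0 := by positivity
    field_simp
    ring


lemma slice_eq_smul (m : ℕ) {t : ℝ} (ht : 0 ≤ t) (ht1 : t < 1) :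
    {μ : Fin m → ℝ | (∀ j, 0 ≤ μ j) ∧ t + ∑ j, μ j ≤ 1} = (1 - t) • cornerSimplex m := by
  have hc : (0:ℝ) < 1 - t := by linarith
  ext μ
  rw [Set.mem_smul_set_iff_inv_smul_mem₀ (ne_of_gt hc)]
  simp only [cornerSimplex, Set.mem_setOf_eq, Pi.smul_apply, smul_eq_mul, ← Finset.mul_sum]
  constructor
  · rintro ⟨h0, hsum⟩
    refine ⟨fun j => mul_nonneg (by positivity) (h0 j), ?_⟩
    rw [inv_mul_le_iff₀ hc, mul_one]
    linarith
  · rintro ⟨h0, hsum⟩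
    have h0' : ∀ j, 0 ≤ μ j := by
      intro j
      have he : μ j = (1 - t) * ((1 - t)⁻¹ * μ j) := by field_simp
      rw [he]
      exact mul_nonneg hc.le (h0 j)
    refine ⟨h0', ?_⟩
    rw [inv_mul_le_iff₀ hc, mul_one] at hsum
    linarith

lemma moment_step (m : ℕ) (Vle : volume (cornerSimplex m) ≤ ENNReal.ofReal (1 / Nat.factorial m))
    (k : ℕ) (j : Fin (m + 1)) :
    ∫⁻ l in cornerSimplex (m + 1), ENNReal.ofReal ((l j) ^ k) ≤
      ENNReal.ofReal ((Nat.factorial k : ℝ) / (Nat.factorial (m + 1 + k))) := by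
  classical
  set e := MeasurableEquiv.piFinSuccAbove (fun _ : Fin (m + 1) => ℝ) j with he
  have hmp : MeasurePreserving e.symm volume volume :=
    (volume_preserving_piFinSuccAbove (fun _ : Fin (m + 1) => ℝ) j).symm e
  set f : (Fin (m + 1) → ℝ) → ENNReal :=
    (cornerSimplex (m + 1)).indicator (fun l => ENNReal.ofReal ((l j) ^ k)) with hf
  have hfmeas : Measurable f := by
    refine Measurable.indicator ?_ (cornerSimplex_measurableSet (m + 1))
    exact (measurable_pi_apply j).pow_const k |>.ennreal_ofReal
  have h1 : ∫⁻ l in cornerSimplex (m + 1), ENNReal.ofReal ((l j) ^ k) = ∫⁻ l, f l := by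
    rw [hf, lintegral_indicator (cornerSimplex_measurableSet (m + 1))]
  have h2 : ∫⁻ l, f l = ∫⁻ q : ℝ × (Fin m → ℝ), f (e.symm q) := (hmp.lintegral_comp hfmeas).symm
  set A : Set (ℝ × (Fin m → ℝ)) :=
    {q | (0 ≤ q.1 ∧ ∀ i, 0 ≤ q.2 i) ∧ q.1 + ∑ i, q.2 i ≤ 1} with hA
  have hAmeas : MeasurableSet A := by
    have hAeq : A = ({q : ℝ × (Fin m → ℝ) | 0 ≤ q.1} ∩ ⋂ i, {q : ℝ × (Fin m → ℝ) | 0 ≤ q.2 i})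
        ∩ {q : ℝ × (Fin m → ℝ) | q.1 + ∑ i, q.2 i ≤ 1} := by
      ext q
      simp only [hA, Set.mem_setOf_eq, Set.mem_inter_iff, Set.mem_iInter, and_assoc]
    rw [hAeq]
    refine (IsClosed.inter (IsClosed.inter ?_ ?_) ?_).measurableSet
    · exact isClosed_le continuous_const continuous_fst
    · exact isClosed_iInter fun i =>
        isClosed_le continuous_const ((continuous_apply i).comp continuous_snd)
    · exact isClosed_le (continuous_fst.add
        (continuous_finset_sum _ fun i _ => (continuous_apply i).comp continuous_snd))
        continuous_const
  have hmem : ∀ q : ℝ × (Fin m → ℝ), e.symm q ∈ cornerSimplex (m + 1) ↔ q ∈ A := by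
    rintro ⟨t, μ⟩
    have hsymm : e.symm (t, μ) = j.insertNth t μ := rfl
    rw [hsymm]
    simp only [cornerSimplex, Set.mem_setOf_eq, hA]
    rw [Fin.forall_iff_succAbove j, Fin.sum_univ_succAbove (j.insertNth t μ) j]
    simp [Fin.insertNth_apply_same, Fin.insertNth_apply_succAbove]
  have h3 : ∀ q : ℝ × (Fin m → ℝ), f (e.symm q) =
      A.indicator (fun q : ℝ × (Fin m → ℝ) => ENNReal.ofReal (q.1 ^ k)) q := by
    rintro ⟨t, μ⟩
    have hsymm : e.symm (t, μ) = j.insertNth t μ := rfl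
    by_cases hq : (t, μ) ∈ A
    · rw [hf, Set.indicator_of_mem ((hmem (t, μ)).2 hq), Set.indicator_of_mem hq, hsymm,
        Fin.insertNth_apply_same]
    · rw [hf, Set.indicator_of_notMem (fun hc => hq ((hmem (t, μ)).1 hc)),
        Set.indicator_of_notMem hq]
  rw [h1, h2]
  simp only [h3]
  rw [Measure.volume_eq_prod, lintegral_prod _ (by
    exact ((measurable_fst.pow_const k).ennreal_ofReal.indicator hAmeas).aemeasurable)]
  -- inner integral
  have hinner : ∀ t : ℝ, ∫⁻ μ : Fin m → ℝ,
      A.indicator (fun q : ℝ × (Fin m → ℝ) => ENNReal.ofReal (q.1 ^ k)) (t, μ)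
      = ENNReal.ofReal (t ^ k) * volume {μ : Fin m → ℝ | (t, μ) ∈ A} := by
    intro t
    have : ∀ μ : Fin m → ℝ, A.indicator (fun q : ℝ × (Fin m → ℝ) => ENNReal.ofReal (q.1 ^ k)) (t, μ)
        = {μ : Fin m → ℝ | (t, μ) ∈ A}.indicator (fun _ => ENNReal.ofReal (t ^ k)) μ := by
      intro μ
      by_cases hq : (t, μ) ∈ A
      · rw [Set.indicator_of_mem hq,
          Set.indicator_of_mem (show μ ∈ {μ : Fin m → ℝ | (t, μ) ∈ A} from hq)]
      · rw [Set.indicator_of_notMem hq,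
          Set.indicator_of_notMem (show μ ∉ {μ : Fin m → ℝ | (t, μ) ∈ A} from hq)]
    simp only [this]
    rw [lintegral_indicator_const
      (show MeasurableSet {μ : Fin m → ℝ | (t, μ) ∈ A} from measurable_prodMk_left hAmeas)]
  simp only [hinner]
  -- bound the slice volume
  have hslice : ∀ t : ℝ, t ≠ 1 →
      ENNReal.ofReal (t ^ k) * volume {μ : Fin m → ℝ | (t, μ) ∈ A}
        ≤ (Set.Icc (0:ℝ) 1).indicator
            (fun t => ENNReal.ofReal (t ^ k * (1 - t) ^ m)) t * volume (cornerSimplex m) := by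
    intro t ht1
    rcases lt_or_ge t 0 with ht | ht
    · have : {μ : Fin m → ℝ | (t, μ) ∈ A} = ∅ := by
        ext μ; simp only [hA, Set.mem_setOf_eq, Set.mem_empty_iff_false, iff_false]
        rintro ⟨⟨h0, _⟩, _⟩; linarith
      simp [this]
    rcases lt_or_ge (1:ℝ) t with ht' | ht'
    · have : {μ : Fin m → ℝ | (t, μ) ∈ A} = ∅ := by
        ext μ; simp only [hA, Set.mem_setOf_eq, Set.mem_empty_iff_false, iff_false]
        rintro ⟨⟨h0, hpos⟩, hsum⟩
        have : 0 ≤ ∑ i, μ i := Finset.sum_nonneg fun i _ => hpos i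
        linarith
      simp [this]
    · have htlt : t < 1 := lt_of_le_of_ne ht' ht1
      have hset : {μ : Fin m → ℝ | (t, μ) ∈ A} = (1 - t) • cornerSimplex m := by
        rw [← slice_eq_smul m ht htlt]
        ext μ; simp only [hA, Set.mem_setOf_eq]; tauto
      rw [hset, Set.indicator_of_mem (Set.mem_Icc.2 ⟨ht, ht'⟩)]
      rw [Measure.addHaar_smul volume (1 - t) (cornerSimplex m)]
      rw [Module.finrank_fin_fun]
      have habs : |(1 - t) ^ m| = (1 - t) ^ m := abs_of_nonneg (pow_nonneg (by linarith) m)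
      rw [habs, ENNReal.ofReal_mul (pow_nonneg ht k)]
      exact le_of_eq (by ring)
  have hae : ∀ᵐ t : ℝ, ENNReal.ofReal (t ^ k) * volume {μ : Fin m → ℝ | (t, μ) ∈ A}
        ≤ (Set.Icc (0:ℝ) 1).indicator
            (fun t => ENNReal.ofReal (t ^ k * (1 - t) ^ m)) t * volume (cornerSimplex m) := by
    have h1 : ∀ᵐ t : ℝ, t ≠ 1 := by
      rw [ae_iff]
      have : {t : ℝ | ¬ t ≠ 1} = {1} := by ext t; simp
      rw [this, Real.volume_singleton]
    filter_upwards [h1] with t ht using hslice t ht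
  calc ∫⁻ t : ℝ, ENNReal.ofReal (t ^ k) * volume {μ : Fin m → ℝ | (t, μ) ∈ A}
      ≤ ∫⁻ t : ℝ, (Set.Icc (0:ℝ) 1).indicator
          (fun t => ENNReal.ofReal (t ^ k * (1 - t) ^ m)) t * volume (cornerSimplex m) :=
        lintegral_mono_ae hae
    _ = (∫⁻ t in Set.Icc (0:ℝ) 1, ENNReal.ofReal (t ^ k * (1 - t) ^ m)) *
          volume (cornerSimplex m) := by
        have hcont : Continuous fun t : ℝ => t ^ k * (1 - t) ^ m :=
          (continuous_pow k).mul ((continuous_const.sub continuous_id).pow m)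
        rw [lintegral_mul_const _
          ((hcont.measurable.ennreal_ofReal).indicator measurableSet_Icc),
          lintegral_indicator measurableSet_Icc]
    _ ≤ ENNReal.ofReal ((Nat.factorial k * Nat.factorial m : ℝ) / Nat.factorial (k + m + 1)) *
          ENNReal.ofReal (1 / Nat.factorial m) := by
        refine mul_le_mul' (le_of_eq ?_) Vle
        rw [← ofReal_integral_eq_lintegral_ofReal]
        · congr 1
          rw [← beta_nat m k, intervalIntegral.integral_of_le zero_le_one,
            MeasureTheory.integral_Icc_eq_integral_Ioc]
        · exact ((continuous_pow k).mul
            ((continuous_const.sub continuous_id).pow m)).integrableOn_Icc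
        · refine (ae_restrict_iff' measurableSet_Icc).2 (Filter.Eventually.of_forall ?_)
          intro t ht
          have h1 : (0:ℝ) ≤ t := ht.1
          have h2 : t ≤ 1 := ht.2
          exact mul_nonneg (pow_nonneg h1 k) (pow_nonneg (by linarith) m)
    _ ≤ ENNReal.ofReal ((Nat.factorial k : ℝ) / (Nat.factorial (m + 1 + k))) := by
        have hom := ENNReal.ofReal_mul
          (p := (Nat.factorial k * Nat.factorial m : ℝ) / (Nat.factorial (k + m + 1)))
          (q := 1 / (Nat.factorial m : ℝ)) (by positivity)
        rw [← hom]
        refine ENNReal.ofReal_le_ofReal (le_of_eq ?_)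
        have h3 : k + m + 1 = m + 1 + k := by omega
        rw [h3]
        have hf1 : (Nat.factorial m : ℝ) ≠ 0 := by positivity
        have hf2 : (Nat.factorial (m + 1 + k) : ℝ) ≠ 0 := by positivity
        field_simp

lemma vol_cornerSimplex : ∀ m : ℕ,
    volume (cornerSimplex m) ≤ ENNReal.ofReal (1 / Nat.factorial m) := by
  intro m
  induction m with
  | zero =>
    have huniv : cornerSimplex 0 = Set.univ := by
      ext l
      simp [cornerSimplex]
    rw [huniv]
    have : (volume : Measure (Fin 0 → ℝ)) Set.univ = 1 := by
      rw [MeasureTheory.volume_pi, Measure.pi_univ]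
      simp
    rw [this]
    simp
  | succ m ih =>
    have h := moment_step m ih 0 0
    simpa using h

lemma moment_bound (m : ℕ) (k : ℕ) (j : Fin m) :
    ∫⁻ l in cornerSimplex m, ENNReal.ofReal ((l j) ^ k) ≤
      ENNReal.ofReal ((Nat.factorial k : ℝ) / (Nat.factorial (m + k))) := by
  rcases m with - | m'
  · exact absurd j.2 (by omega)
  · exact moment_step m' (vol_cornerSimplex m') k j


set_option maxHeartbeats 1000000 in
lemma exp_taylor_remainder (s : ℝ) (p : ℕ) :
    |Real.exp (-s) - ∑ ℓ ∈ Finset.range (p + 1), (-s) ^ ℓ / (Nat.factorial ℓ : ℝ)|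
      ≤ ∑' i : ℕ, |s| ^ (i + (p + 1)) / (Nat.factorial (i + (p + 1)) : ℝ) := by
  have hs : Summable fun n : ℕ => (-s) ^ n / (Nat.factorial n : ℝ) :=
    Real.summable_pow_div_factorial (-s)
  have hexp : Real.exp (-s) = ∑' n : ℕ, (-s) ^ n / (Nat.factorial n : ℝ) := by
    rw [Real.exp_eq_exp_ℝ, NormedSpace.exp_eq_tsum_div]
  rw [hexp, ← hs.sum_add_tsum_nat_add (p + 1), add_sub_cancel_left]
  have hnorm : ∀ n : ℕ, ‖(-s) ^ n / (Nat.factorial n : ℝ)‖ = |s| ^ n / (Nat.factorial n : ℝ) := by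
    intro n
    rw [Real.norm_eq_abs, abs_div, abs_pow, abs_neg,
      abs_of_nonneg (by positivity : (0:ℝ) ≤ (Nat.factorial n : ℝ))]
  have hs2 : Summable fun i : ℕ => ‖(-s) ^ (i + (p + 1)) / (Nat.factorial (i + (p + 1)) : ℝ)‖ := by
    simp only [hnorm]
    exact (summable_nat_add_iff (p + 1)).mpr (Real.summable_pow_div_factorial |s|)
  calc |∑' i : ℕ, (-s) ^ (i + (p + 1)) / (Nat.factorial (i + (p + 1)) : ℝ)|
      ≤ ∑' i : ℕ, ‖(-s) ^ (i + (p + 1)) / (Nat.factorial (i + (p + 1)) : ℝ)‖ :=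
        norm_tsum_le_tsum_norm hs2
    _ = _ := tsum_congr fun i => hnorm _

lemma rpow_half_nat (m k : ℕ) : (m : ℝ) ^ ((k : ℝ) / 2) = Real.sqrt (m : ℝ) ^ k := by
  rw [Real.sqrt_eq_rpow, ← Real.rpow_natCast ((m : ℝ) ^ ((1:ℝ)/2)) k,
    ← Real.rpow_mul (Nat.cast_nonneg m)]
  congr 1
  ring

lemma l1_le_sqrt_mul_norm (m : ℕ) (x : EuclideanSpace ℝ (Fin m)) :
    ∑ j, |x j| ≤ Real.sqrt m * ‖x‖ := by
  have h1 : (∑ j, |x j|) ^ 2 ≤ (m : ℝ) * ∑ j, |x j| ^ 2 := by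
    have := sq_sum_le_card_mul_sum_sq (s := Finset.univ) (f := fun j : Fin m => |x j|)
    simpa using this
  have h2 : ∑ j, |x j| ^ 2 = ∑ j, x j ^ 2 := by simp [sq_abs]
  have hnorm : ‖x‖ = Real.sqrt (∑ j, x j ^ 2) := by
    simp only [EuclideanSpace.norm_eq, Real.norm_eq_abs, sq_abs]
  calc ∑ j, |x j| = Real.sqrt ((∑ j, |x j|) ^ 2) :=
        (Real.sqrt_sq (Finset.sum_nonneg fun j _ => abs_nonneg _)).symm
    _ ≤ Real.sqrt ((m : ℝ) * ∑ j, x j ^ 2) := Real.sqrt_le_sqrt (by rw [← h2]; exact h1)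
    _ = Real.sqrt m * Real.sqrt (∑ j, x j ^ 2) := Real.sqrt_mul (Nat.cast_nonneg m) _
    _ = Real.sqrt m * ‖x‖ := by rw [hnorm]

lemma jensen_pow (m k : ℕ) (y l : Fin m → ℝ) (hy : ∀ j, 0 ≤ y j) (hl : ∀ j, 0 ≤ l j)
    (hY : 0 < ∑ j, y j) :
    (∑ j, y j * l j) ^ k ≤ (∑ j, y j) ^ k * ∑ j, (y j / ∑ i, y i) * (l j) ^ k := by
  set Y := ∑ j, y j with hYdef
  have hw : ∑ j, y j / Y = 1 := by
    rw [← Finset.sum_div, div_self hY.ne']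
  have hjen := (convexOn_pow k).map_sum_le (t := Finset.univ) (w := fun j => y j / Y) (p := l)
    (fun j _ => div_nonneg (hy j) hY.le) hw (fun j _ => Set.mem_Ici.2 (hl j))
  simp only [smul_eq_mul] at hjen
  have hfac : ∑ j, y j * l j = Y * ∑ j, (y j / Y) * l j := by
    rw [Finset.mul_sum]
    refine Finset.sum_congr rfl fun j _ => ?_
    field_simp
  rw [hfac, mul_pow]
  exact mul_le_mul_of_nonneg_left hjen (pow_nonneg hY.le k)


lemma per_term (m : ℕ) (x : EuclideanSpace ℝ (Fin m)) (k : ℕ) (hk : 1 ≤ k) :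
    ∫⁻ l in cornerSimplex m, ENNReal.ofReal (|∑ j, x j * l j| ^ k / (Nat.factorial k : ℝ))
      ≤ ENNReal.ofReal (Real.sqrt m ^ k * ‖x‖ ^ k / (Nat.factorial (m + k) : ℝ)) := by
  classical
  set y : Fin m → ℝ := fun j => |x j| with hy
  set Y : ℝ := ∑ j, y j with hYdef
  have hynn : ∀ j, 0 ≤ y j := fun j => abs_nonneg _
  have hY0 : 0 ≤ Y := Finset.sum_nonneg fun j _ => hynn j
  rcases eq_or_lt_of_le hY0 with hY | hY
  · have hall : ∀ j, x j = 0 := by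
      intro j
      have h := (Finset.sum_eq_zero_iff_of_nonneg (fun j _ => hynn j)).1 hY.symm j (mem_univ j)
      exact abs_eq_zero.1 h
    have hzero : ∀ l : Fin m → ℝ, |∑ j, x j * l j| ^ k / (Nat.factorial k : ℝ) = 0 := by
      intro l
      rw [Finset.sum_eq_zero fun j _ => by rw [hall j, zero_mul], abs_zero,
        zero_pow (by omega), zero_div]
    simp only [hzero, ENNReal.ofReal_zero, lintegral_zero]
    exact bot_le
  · have hw : ∑ j, y j / Y = 1 := by rw [← Finset.sum_div, div_self hY.ne']
    set C : ℝ := Y ^ k / (Nat.factorial k : ℝ) with hC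
    have hCnn : 0 ≤ C := by positivity
    have hfk : (0:ℝ) < (Nat.factorial k : ℝ) := by positivity
    -- pointwise real bound on the simplex
    have hreal : ∀ l ∈ cornerSimplex m,
        |∑ j, x j * l j| ^ k / (Nat.factorial k : ℝ) ≤ ∑ j, C * (y j / Y) * (l j) ^ k := by
      intro l hl
      have habs : |∑ j, x j * l j| ≤ ∑ j, y j * l j := by
        calc |∑ j, x j * l j| ≤ ∑ j, |x j * l j| := Finset.abs_sum_le_sum_abs _ _
          _ = ∑ j, y j * l j := Finset.sum_congr rfl fun j _ => by
              rw [abs_mul, abs_of_nonneg (hl.1 j)]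
      have hpow : |∑ j, x j * l j| ^ k ≤ (∑ j, y j * l j) ^ k :=
        pow_le_pow_left₀ (abs_nonneg _) habs k
      have hjen := jensen_pow m k y l hynn hl.1 hY
      calc |∑ j, x j * l j| ^ k / (Nat.factorial k : ℝ)
          ≤ (Y ^ k * ∑ j, (y j / Y) * (l j) ^ k) / (Nat.factorial k : ℝ) := by
            gcongr
            exact hpow.trans hjen
        _ = ∑ j, C * (y j / Y) * (l j) ^ k := by
            rw [Finset.mul_sum, Finset.sum_div]
            refine Finset.sum_congr rfl fun j _ => ?_
            rw [hC]
            ring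
    -- bound the lintegral
    have hmeas : Measurable fun l : Fin m → ℝ =>
        ENNReal.ofReal (∑ j, C * (y j / Y) * (l j) ^ k) := by
      refine Measurable.ennreal_ofReal ?_
      exact Finset.measurable_sum _ fun j _ => ((measurable_pi_apply j).pow_const k).const_mul _
    calc ∫⁻ l in cornerSimplex m, ENNReal.ofReal (|∑ j, x j * l j| ^ k / (Nat.factorial k : ℝ))
        ≤ ∫⁻ l in cornerSimplex m, ENNReal.ofReal (∑ j, C * (y j / Y) * (l j) ^ k) := by
          refine setLIntegral_mono hmeas fun l hl => ENNReal.ofReal_le_ofReal (hreal l hl)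
      _ = ∫⁻ l in cornerSimplex m, ∑ j, ENNReal.ofReal (C * (y j / Y)) *
            ENNReal.ofReal ((l j) ^ k) := by
          refine setLIntegral_congr_fun (cornerSimplex_measurableSet m)
            (fun l hl => ?_)
          rw [ENNReal.ofReal_sum_of_nonneg fun j _ =>
            mul_nonneg (mul_nonneg hCnn (div_nonneg (hynn j) hY0)) (pow_nonneg (hl.1 j) k)]
          refine Finset.sum_congr rfl fun j _ => ?_
          rw [ENNReal.ofReal_mul (mul_nonneg hCnn (div_nonneg (hynn j) hY0))]
      _ = ∑ j, ENNReal.ofReal (C * (y j / Y)) * ∫⁻ l in cornerSimplex m,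
            ENNReal.ofReal ((l j) ^ k) := by
          rw [lintegral_finset_sum _ fun j _ => Measurable.const_mul
            (((measurable_pi_apply j).pow_const k).ennreal_ofReal) _]
          refine Finset.sum_congr rfl fun j _ => ?_
          rw [lintegral_const_mul _ ((measurable_pi_apply j).pow_const k).ennreal_ofReal]
      _ ≤ ∑ j, ENNReal.ofReal (C * (y j / Y)) *
            ENNReal.ofReal ((Nat.factorial k : ℝ) / (Nat.factorial (m + k))) := by
          exact Finset.sum_le_sum fun j _ => mul_le_mul_right (moment_bound m k j) _
      _ = ENNReal.ofReal (Y ^ k / (Nat.factorial (m + k))) := by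
          rw [← Finset.sum_mul, ← ENNReal.ofReal_sum_of_nonneg fun j _ =>
            mul_nonneg hCnn (div_nonneg (hynn j) hY0)]
          rw [← ENNReal.ofReal_mul (Finset.sum_nonneg fun j _ =>
            mul_nonneg hCnn (div_nonneg (hynn j) hY0))]
          congr 1
          rw [← Finset.mul_sum, hw, mul_one, hC]
          field_simp
      _ ≤ ENNReal.ofReal (Real.sqrt m ^ k * ‖x‖ ^ k / (Nat.factorial (m + k) : ℝ)) := by
          refine ENNReal.ofReal_le_ofReal ?_
          gcongr
          rw [← mul_pow]
          exact pow_le_pow_left₀ hY0 (l1_le_sqrt_mul_norm m x) k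

set_option maxHeartbeats 2000000 in
/-- **Taylor approximation error for the Dirichlet Laplace transform.** For every `m ≥ 1`,
every `p ≥ 0` and every `x ∈ ℝ^m` (with Euclidean norm `‖x‖`),
`|L_m(x) − L̂_m^{(p)}(x)| ≤ Σ_{i=p+1}^∞ m^{i/2}·‖x‖^i·m!/(m+i)!`, the series on the right
being convergent. -/
theorem dirichletLaplace_taylor_error (m : ℕ) (hm : 1 ≤ m) (p : ℕ)
    (x : EuclideanSpace ℝ (Fin m)) :
    Summable (fun i : ℕ =>
      (m : ℝ) ^ (((i + (p + 1) : ℕ) : ℝ) / 2) * ‖x‖ ^ (i + (p + 1))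
        * (Nat.factorial m : ℝ) / (Nat.factorial (m + (i + (p + 1))) : ℝ))
    ∧ |dirichletLaplace m (fun j => x j) - dirichletLaplaceTaylor m p (fun j => x j)|
        ≤ ∑' i : ℕ,
            (m : ℝ) ^ (((i + (p + 1) : ℕ) : ℝ) / 2) * ‖x‖ ^ (i + (p + 1))
              * (Nat.factorial m : ℝ) / (Nat.factorial (m + (i + (p + 1))) : ℝ) := by
  classical
  set d : ℕ → ℝ := fun i =>
    Real.sqrt m ^ (i + (p + 1)) * ‖x‖ ^ (i + (p + 1))
      / (Nat.factorial (m + (i + (p + 1))) : ℝ) with hd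
  have hterm : ∀ i : ℕ,
      (m : ℝ) ^ (((i + (p + 1) : ℕ) : ℝ) / 2) * ‖x‖ ^ (i + (p + 1))
        * (Nat.factorial m : ℝ) / (Nat.factorial (m + (i + (p + 1))) : ℝ)
      = (Nat.factorial m : ℝ) * d i := by
    intro i
    simp only [hd]
    rw [rpow_half_nat]
    ring
  have hdnn : ∀ i : ℕ, 0 ≤ d i := fun i => by simp only [hd]; positivity
  have hdle : ∀ i : ℕ, d i ≤ (Real.sqrt m * ‖x‖) ^ (i + (p + 1))
      / (Nat.factorial (i + (p + 1)) : ℝ) := by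
    intro i
    simp only [hd, mul_pow]
    refine div_le_div_of_nonneg_left ?_ (by positivity) ?_
    · exact mul_nonneg (pow_nonneg (Real.sqrt_nonneg _) _) (pow_nonneg (norm_nonneg _) _)
    · exact_mod_cast Nat.factorial_le (Nat.le_add_left _ _)
  have hdsum : Summable d := Summable.of_nonneg_of_le hdnn hdle
    ((summable_nat_add_iff (p + 1)).mpr
      (Real.summable_pow_div_factorial (Real.sqrt m * ‖x‖)))
  refine ⟨(summable_congr hterm).mpr (hdsum.mul_left _), ?_⟩
  -- continuity and integrability
  have hscont : Continuous fun l : Fin m → ℝ => ∑ j, x j * l j :=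
    continuous_finset_sum _ fun j _ => continuous_const.mul (continuous_apply j)
  have hIexp : IntegrableOn (fun l : Fin m → ℝ => Real.exp (-∑ j, x j * l j))
      (cornerSimplex m) volume :=
    ((Real.continuous_exp.comp hscont.neg).continuousOn).integrableOn_compact
      (cornerSimplex_isCompact m)
  have hIpow : ∀ ℓ : ℕ, IntegrableOn
      (fun l : Fin m → ℝ => (-∑ j, x j * l j) ^ ℓ / (Nat.factorial ℓ : ℝ))
      (cornerSimplex m) volume := fun ℓ =>
    (((hscont.neg.pow ℓ).div_const _).continuousOn).integrableOn_compact
      (cornerSimplex_isCompact m)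
  have hIsum : IntegrableOn
      (fun l : Fin m → ℝ => ∑ ℓ ∈ Finset.range (p + 1),
        (-∑ j, x j * l j) ^ ℓ / (Nat.factorial ℓ : ℝ)) (cornerSimplex m) volume :=
    MeasureTheory.integrable_finset_sum _ fun ℓ _ => hIpow ℓ
  set F : (Fin m → ℝ) → ℝ := fun l =>
    Real.exp (-∑ j, x j * l j) - ∑ ℓ ∈ Finset.range (p + 1),
      (-∑ j, x j * l j) ^ ℓ / (Nat.factorial ℓ : ℝ) with hF
  have h1 : ∫ l in cornerSimplex m, F l
      = (∫ l in cornerSimplex m, Real.exp (-∑ j, x j * l j))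
        - ∑ ℓ ∈ Finset.range (p + 1), ∫ l in cornerSimplex m,
            (-∑ j, x j * l j) ^ ℓ / (Nat.factorial ℓ : ℝ) := by
    rw [hF, MeasureTheory.integral_sub hIexp hIsum,
      MeasureTheory.integral_finset_sum _ fun ℓ _ => hIpow ℓ]
  have hdiff : dirichletLaplace m (fun j => x j) - dirichletLaplaceTaylor m p (fun j => x j)
      = (Nat.factorial m : ℝ) * ∫ l in cornerSimplex m, F l := by
    simp only [dirichletLaplace, dirichletLaplaceTaylor, ← mul_sub]
    congr 1
    exact h1.symm
  have hpt : ∀ l : Fin m → ℝ, ENNReal.ofReal ‖F l‖ ≤ ∑' i : ℕ,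
      ENNReal.ofReal (|∑ j, x j * l j| ^ (i + (p + 1))
        / (Nat.factorial (i + (p + 1)) : ℝ)) := by
    intro l
    rw [hF, Real.norm_eq_abs]
    refine le_trans (ENNReal.ofReal_le_ofReal (exp_taylor_remainder (∑ j, x j * l j) p)) ?_
    rw [ENNReal.ofReal_tsum_of_nonneg (fun i => by positivity)
      ((summable_nat_add_iff (p + 1)).mpr
        (Real.summable_pow_div_factorial |∑ j, x j * l j|))]
  have hifun : ∀ i : ℕ, Measurable fun l : Fin m → ℝ =>
      ENNReal.ofReal (|∑ j, x j * l j| ^ (i + (p + 1))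
        / (Nat.factorial (i + (p + 1)) : ℝ)) := fun i =>
    ((((continuous_abs.comp hscont).pow _).div_const _).measurable).ennreal_ofReal
  have hkey : ∫⁻ l in cornerSimplex m, ENNReal.ofReal ‖F l‖
      ≤ ENNReal.ofReal (∑' i : ℕ, d i) := by
    calc ∫⁻ l in cornerSimplex m, ENNReal.ofReal ‖F l‖
        ≤ ∫⁻ l in cornerSimplex m, ∑' i : ℕ,
            ENNReal.ofReal (|∑ j, x j * l j| ^ (i + (p + 1))
              / (Nat.factorial (i + (p + 1)) : ℝ)) := lintegral_mono fun l => hpt l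
      _ = ∑' i : ℕ, ∫⁻ l in cornerSimplex m,
            ENNReal.ofReal (|∑ j, x j * l j| ^ (i + (p + 1))
              / (Nat.factorial (i + (p + 1)) : ℝ)) :=
          lintegral_tsum fun i => (hifun i).aemeasurable
      _ ≤ ∑' i : ℕ, ENNReal.ofReal (Real.sqrt m ^ (i + (p + 1)) * ‖x‖ ^ (i + (p + 1))
            / (Nat.factorial (m + (i + (p + 1))) : ℝ)) :=
          ENNReal.tsum_le_tsum fun i => per_term m x (i + (p + 1)) (by omega)
      _ = ENNReal.ofReal (∑' i : ℕ, d i) := by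
          rw [ENNReal.ofReal_tsum_of_nonneg hdnn hdsum]
  calc |dirichletLaplace m (fun j => x j) - dirichletLaplaceTaylor m p (fun j => x j)|
      = (Nat.factorial m : ℝ) * |∫ l in cornerSimplex m, F l| := by
        rw [hdiff, abs_mul, abs_of_nonneg (by positivity : (0:ℝ) ≤ (Nat.factorial m : ℝ))]
    _ ≤ (Nat.factorial m : ℝ) *
          (∫⁻ l in cornerSimplex m, ENNReal.ofReal ‖F l‖).toReal := by
        refine mul_le_mul_of_nonneg_left ?_ (by positivity)
        simpa [Real.norm_eq_abs] using
          MeasureTheory.norm_integral_le_lintegral_norm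
            (μ := volume.restrict (cornerSimplex m)) F
    _ ≤ (Nat.factorial m : ℝ) * ∑' i : ℕ, d i := by
        refine mul_le_mul_of_nonneg_left ?_ (by positivity)
        have := ENNReal.toReal_mono ENNReal.ofReal_ne_top hkey
        rwa [ENNReal.toReal_ofReal (tsum_nonneg hdnn)] at this
    _ = ∑' i : ℕ, (m : ℝ) ^ (((i + (p + 1) : ℕ) : ℝ) / 2) * ‖x‖ ^ (i + (p + 1))
          * (Nat.factorial m : ℝ) / (Nat.factorial (m + (i + (p + 1))) : ℝ) := by
        rw [← tsum_mul_left]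
        exact tsum_congr fun i => (hterm i).symm
end
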